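/- arXiv:2303.11927 — 5 statements merged into one kernel-verified Lean document; each statement's English description precedes it below -/
import Mathlib

section
/- Renovation property of triangular words for the MGS: Fix M > 0. Let x = (x^{(1)}, …, x^{(l)}) be a finite sequence of weight sequences, each with all entries in [-∞, M], such that the associated word α(x) (whose n-th letter is the index of the first occurrence of the value M in x^{(n)}) is a triangular word. Then for every configuration λ, the displacement 𝔪(Φ_{(x^{(1)},…,x^{(l-1)})}(λ), x^{(l)}) − λ_1 does not depend on λ; moreover 𝔪(Φ_{(x^{(1)},…,x^{(i-1)})}(λ), x^{(i)}) − λ_1 ≥ M for all 1 ≤ i ≤ l. -/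
noncomputable section

/-- `𝔪(λ, x) = max_{1 ≤ i ≤ #λ} (λ_i + x_i)`, for a configuration recorded as the list of its
particle positions in decreasing order. -/
def mvalL (l : List EReal) (x : ℕ → EReal) : EReal :=
  sSup {v | ∃ i : Fin l.length, v = l.get i + x ((i : ℕ) + 1)}

/-- One step `Φ_x` of the max growth system: add a particle at position `𝔪(λ, x)`,
keeping the list sorted in decreasing order. -/
def stepC (x : ℕ → EReal) (l : List EReal) : List EReal :=
  letI : DecidableRel (fun a b : EReal => a ≥ b) := Classical.decRel _
  l.orderedInsert (· ≥ ·) (mvalL l x)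

/-- `Φ_{(x^{(1)},…,x^{(k)})} = Φ_{x^{(k)}} ∘ ⋯ ∘ Φ_{x^{(1)}}`. -/
def iterSteps (xs : List (ℕ → EReal)) (l : List EReal) : List EReal :=
  xs.foldl (fun acc x => stepC x acc) l

end

/-! Renovation holds because, when every weight is at most `M` and the `k+1`-st weight attains `M`
at an index `α ≤ k + 1`, the configuration after `k` steps started from `λ` is
`λ₁ + e₁ ≥ ⋯ ≥ λ₁ + eₖ` followed by `λ`, with displacements `eⱼ ≥ M ≥ 0` not depending on `λ`.
Indeed the old particles contribute at most `λ₁ + M` to the next maximum, and `λ₁ + M` is always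
reached: by `λ₁ + x_{k+1}` if `α = k + 1`, and otherwise by the new particle
`λ₁ + e_{α-1} + x_α ≥ λ₁ + M`. So the next particle sits at `λ₁ + max(M, 𝔪(e, x))`. -/

namespace MaxGrowth

@[simp]
lemma mvalL_nil (x : ℕ → EReal) : mvalL [] x = ⊥ := by
  simp [mvalL]

lemma mvalL_cons (a : EReal) (l : List EReal) (x : ℕ → EReal) :
    mvalL (a :: l) x = (a + x 1) ⊔ mvalL l (fun i => x (i + 1)) := by
  simp only [mvalL, List.length_cons, Fin.exists_fin_succ]
  rw [← sSup_insert]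
  congr 1

lemma mvalL_append (l₁ l₂ : List EReal) (x : ℕ → EReal) :
    mvalL (l₁ ++ l₂) x = mvalL l₁ x ⊔ mvalL l₂ (fun i => x (i + l₁.length)) := by
  induction l₁ generalizing x with
  | nil => simp
  | cons a l ih =>
    simp only [List.cons_append, mvalL_cons, ih, sup_assoc, List.length_cons, add_assoc]

lemma mvalL_map_add (c : EReal) (l : List EReal) (x : ℕ → EReal) :
    mvalL (l.map (c + ·)) x = c + mvalL l x := by
  induction l generalizing x with
  | nil => simp
  | cons a l ih => rw [List.map_cons, mvalL_cons, mvalL_cons, ih, add_assoc, max_add_add_left]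

lemma mvalL_le_add {l : List EReal} {x : ℕ → EReal} {c M : EReal} (hl : ∀ a ∈ l, a ≤ c)
    (hx : ∀ i, x i ≤ M) : mvalL l x ≤ c + M := by
  induction l generalizing x with
  | nil => simp
  | cons a l ih =>
    rw [mvalL_cons]
    exact sup_le (add_le_add (hl a List.mem_cons_self) (hx 1))
      (ih (fun b hb => hl b (List.mem_cons_of_mem a hb)) fun i => hx (i + 1))

lemma getElem_add_le_mvalL (l : List EReal) (x : ℕ → EReal) {i : ℕ} (hi : i < l.length) :
    l[i] + x (i + 1) ≤ mvalL l x :=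
  le_sSup ⟨⟨i, hi⟩, rfl⟩

lemma mvalL_map_add_append {M : EReal} {x : ℕ → EReal} (hx : ∀ i, x i ≤ M)
    {es : List EReal} (hes : ∀ e ∈ es, 0 ≤ e) {a : ℕ} (ha : 1 ≤ a) (ha' : a ≤ es.length + 1)
    (hxa : x a = M) {hd : EReal} {t : List EReal} (ht : ∀ b ∈ t, b ≤ hd) :
    mvalL (es.map (hd + ·) ++ hd :: t) x = hd + (M ⊔ mvalL es x) := by
  rw [mvalL_append, mvalL_map_add, List.length_map, ← max_add_add_left]
  have hupper : mvalL (hd :: t) (fun i => x (i + es.length)) ≤ hd + M :=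
    mvalL_le_add (by simpa using ht) fun i => hx _
  have hlower : hd + M ≤ (hd + mvalL es x) ⊔ mvalL (hd :: t) (fun i => x (i + es.length)) := by
    rcases Nat.lt_or_eq_of_le ha' with ha' | rfl
    · have hi : a - 1 < es.length := by omega
      have hM : M ≤ mvalL es x := calc
        M ≤ es[a - 1] + M := le_add_of_nonneg_left (hes _ (List.getElem_mem hi))
        _ = es[a - 1] + x (a - 1 + 1) := by rw [Nat.sub_add_cancel ha, hxa]
        _ ≤ mvalL es x := getElem_add_le_mvalL es x hi
      exact le_sup_of_le_left (add_le_add le_rfl hM)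
    · rw [mvalL_cons, add_comm 1, hxa]
      exact le_sup_of_le_right le_sup_left
  exact le_antisymm (sup_le le_sup_right (hupper.trans le_sup_left)) (sup_le hlower le_sup_left)

lemma pairwise_ge_map_add_append {es : List EReal} (hes : es.Pairwise (· ≥ ·))
    (hes0 : ∀ e ∈ es, 0 ≤ e) {hd : EReal} {t : List EReal} (ht : (hd :: t).Pairwise (· ≥ ·)) :
    (es.map (hd + ·) ++ hd :: t).Pairwise (· ≥ ·) := by
  refine List.pairwise_append.2 ⟨List.pairwise_map.2 (hes.imp fun h => add_le_add le_rfl h), ht,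
    ?_⟩
  simp only [List.mem_map, forall_exists_index, and_imp, forall_apply_eq_imp_iff₂]
  intro e he b hb
  have hb : b ≤ hd := by
    rcases List.mem_cons.1 hb with rfl | hb
    · exact le_rfl
    · exact List.rel_of_pairwise_cons ht hb
  exact hb.trans (le_add_of_nonneg_right (hes0 e he))

/-- Sorted lists are determined by their elements, which sidesteps the classical decidability
instance inside `stepC`. -/
lemma stepC_eq_of_perm {x : ℕ → EReal} {l l' : List EReal} (hl : l.Pairwise (· ≥ ·))
    (hl' : l'.Pairwise (· ≥ ·)) (hperm : l'.Perm (mvalL l x :: l)) : stepC x l = l' :=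
  letI : DecidableRel (fun a b : EReal => a ≥ b) := Classical.decRel _
  List.Perm.eq_of_pairwise' (hl.orderedInsert _ _) hl'
    ((List.perm_orderedInsert _ _ _).trans hperm.symm)

lemma stepC_map_add_append {M : EReal} (hM : 0 ≤ M) {x : ℕ → EReal} (hx : ∀ i, x i ≤ M)
    {es : List EReal} (hes : es.Pairwise (· ≥ ·)) (hesM : ∀ e ∈ es, M ≤ e) {a : ℕ} (ha : 1 ≤ a)
    (ha' : a ≤ es.length + 1) (hxa : x a = M) {hd : EReal} {t : List EReal}
    (ht : (hd :: t).Pairwise (· ≥ ·)) :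
    stepC x (es.map (hd + ·) ++ hd :: t)
      = (es.orderedInsert (· ≥ ·) (M ⊔ mvalL es x)).map (hd + ·) ++ hd :: t := by
  have hes0 : ∀ e ∈ es, 0 ≤ e := fun e he => hM.trans (hesM e he)
  have hins0 : ∀ e ∈ es.orderedInsert (· ≥ ·) (M ⊔ mvalL es x), 0 ≤ e := by
    intro e he
    rcases (List.mem_orderedInsert _).1 he with rfl | he
    · exact hM.trans le_sup_left
    · exact hes0 e he
  refine stepC_eq_of_perm (pairwise_ge_map_add_append hes hes0 ht)
    (pairwise_ge_map_add_append (hes.orderedInsert _ _) hins0 ht) ?_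
  rw [mvalL_map_add_append hx hes0 ha ha' hxa fun b hb => List.rel_of_pairwise_cons ht hb]
  exact ((List.perm_orderedInsert _ _ _).map _).append_right _

lemma iterSteps_append_singleton (ws : List (ℕ → EReal)) (x : ℕ → EReal) (l : List EReal) :
    iterSteps (ws ++ [x]) l = stepC x (iterSteps ws l) := by
  simp [iterSteps]

lemma iterSteps_eq_map_add_append {M : EReal} (hM : 0 ≤ M) (ws : List (ℕ → EReal))
    (hws : ∀ w ∈ ws, ∀ i, w i ≤ M)
    (htri : ∀ n (hn : n < ws.length), ∃ a, 1 ≤ a ∧ a ≤ n + 1 ∧ ws[n] a = M) :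
    ∃ es : List EReal, es.Pairwise (· ≥ ·) ∧ (∀ e ∈ es, M ≤ e) ∧ es.length = ws.length ∧
      ∀ hd t, (hd :: t).Pairwise (· ≥ ·) →
        iterSteps ws (hd :: t) = es.map (hd + ·) ++ hd :: t := by
  induction ws using List.reverseRecOn with
  | nil => exact ⟨[], .nil, by simp, rfl, fun _ _ _ => rfl⟩
  | append_singleton ws x ih =>
    obtain ⟨es, hes, hesM, hlen, hiter⟩ := ih (fun w hw => hws w (List.mem_append_left _ hw))
      fun n hn => by
        obtain ⟨a, h⟩ := htri n (by rw [List.length_append, List.length_singleton]; omega)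
        rw [List.getElem_append_left hn] at h
        exact ⟨a, h⟩
    obtain ⟨a, ha, ha', hxa⟩ : ∃ a, 1 ≤ a ∧ a ≤ ws.length + 1 ∧ x a = M := by
      simpa using htri ws.length (by simp)
    refine ⟨es.orderedInsert (· ≥ ·) (M ⊔ mvalL es x), hes.orderedInsert _ _, ?_,
      by rw [List.orderedInsert_length, hlen, List.length_append, List.length_singleton],
      fun hd t ht => ?_⟩
    · intro e he
      rcases (List.mem_orderedInsert _).1 he with rfl | he
      · exact le_sup_left
      · exact hesM e he
    · rw [iterSteps_append_singleton, hiter hd t ht]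
      exact stepC_map_add_append hM (hws x (by simp)) hes hesM ha (hlen ▸ ha') hxa ht

end MaxGrowth

open MaxGrowth in
theorem mgs_renovation_triangular_general (M : ℝ) (hM : 0 < M) (l : ℕ)
    (xs : Fin l → (ℕ → EReal))
    (hbound : ∀ n i, xs n i ≤ (M : EReal))
    (α : Fin l → ℕ)
    (hα : ∀ n : Fin l, 1 ≤ α n ∧ xs n (α n) = (M : EReal) ∧
      ∀ j, 1 ≤ j → j < α n → xs n j ≠ (M : EReal))
    (htri : ∀ n : Fin l, α n ≤ (n : ℕ) + 1) :
    ∀ i : Fin l, ∃ d : EReal, (M : EReal) ≤ d ∧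
      ∀ lam : List EReal, lam ≠ [] → lam.Pairwise (· ≥ ·) →
        mvalL (iterSteps ((List.ofFn xs).take (i : ℕ)) lam) (xs i) = lam.headI + d := by
  intro i
  have hM0 : (0 : EReal) ≤ M := by exact_mod_cast hM.le
  obtain ⟨es, -, hesM, hlen, hiter⟩ := iterSteps_eq_map_add_append hM0 ((List.ofFn xs).take i)
    (fun w hw => by
      obtain ⟨n, rfl⟩ := List.mem_ofFn.1 (List.mem_of_mem_take hw)
      exact hbound n)
    fun n hn => by
      have hnl : n < l := by
        simp only [List.length_take, List.length_ofFn] at hn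
        omega
      simpa using ⟨α ⟨n, hnl⟩, (hα _).1, htri _, (hα _).2.1⟩
  refine ⟨M ⊔ mvalL es (xs i), le_sup_left, fun lam hne hlam => ?_⟩
  obtain ⟨hd, t, rfl⟩ := List.exists_cons_of_ne_nil hne
  rw [hiter hd t hlam]
  exact mvalL_map_add_append (hbound i) (fun e he => hM0.trans (hesM e he)) (hα i).1
    (by simpa [hlen] using htri i) (hα i).2.1 fun b hb => List.rel_of_pairwise_cons hlam hb

/-- renovation property of triangular words. If each weight sequence
`xs n` has entries in `[-∞, M]`, `α n` is the index of the first occurrence of the value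
`M` in `xs n` (indices starting at 1), and the word `α` is triangular (`α n ≤ n+1` for the
0-based position `n`), then for every `1 ≤ i ≤ l` the displacement
`𝔪(Φ_{(xs 1,…,xs (i-1))}(λ), xs i) − λ_1` is a quantity `d ≥ M` not depending on the
configuration `λ`. -/
theorem mgs_renovation_triangular (M : ℝ) (hM : 0 < M) (l : ℕ) (hl : 1 ≤ l)
    (xs : Fin l → (ℕ → EReal))
    (hbound : ∀ n i, xs n i ≤ (M : EReal))
    (α : Fin l → ℕ)
    (hα : ∀ n : Fin l, 1 ≤ α n ∧ xs n (α n) = (M : EReal) ∧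
      ∀ j, 1 ≤ j → j < α n → xs n j ≠ (M : EReal))
    (htri : ∀ n : Fin l, α n ≤ (n : ℕ) + 1) :
    ∀ i : Fin l, ∃ d : EReal, (M : EReal) ≤ d ∧
      ∀ lam : List EReal, lam ≠ [] → lam.Pairwise (· ≥ ·) →
        mvalL (iterSteps ((List.ofFn xs).take (i : ℕ)) lam) (xs i) = lam.headI + d :=
  mgs_renovation_triangular_general M hM l xs hbound α hα htri
end

section
/- Conditional distribution in the renovation process: Let (ξ_n)_{n∈ℤ} be i.i.d. Geometric(p) random variables and for n ≥ 1 define M_n = #{i ∈ {−n+2, …, 1} : ξ_i > i + n − 1}, with M_0 = 0. Then conditionally on M_{n-1}, the random variable M_n has the Binomial(M_{n-1} + 1, 1−p) distribution. -/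
open MeasureTheory ProbabilityTheory

/-- `M_n = #{i ∈ ⟦-n+2, 1⟧ : ξ_i > i + n - 1}` (so `M_0 = 0`, the index interval being
empty). -/
noncomputable def Mcount {Ω : Type*} (ξ : ℤ → Ω → ℕ) (n : ℕ) (ω : Ω) : ℕ :=
  ((Finset.Icc (2 - (n : ℤ)) 1).filter (fun i => i + (n : ℤ) - 1 < (ξ i ω : ℤ))).card

/-!
Write `J = ⟦2-n, 1⟧` and `a = 1-n`. Put `A_i = {ξ_i > i+n-1}` for `i ∈ J`, let `A_a` be the
sure event, and put `B_i = {ξ_i > i+n}` on `J ∪ {a}`. Then `M_n + 1 = #{i : A_i}`,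
`M_{n+1} = #{i : B_i}` and `B_i ⊆ A_i`, and memorylessness of the geometric law gives
`P(B_i) = (1-p) P(A_i)` (for `i = a` because `ξ_a ≥ 1` almost surely).

For independent `Y_i` and `B_i ⊆ A_i` with `P(Y_i ∈ B_i) = q P(Y_i ∈ A_i)`, independence gives
`P({i : Y_i ∈ A_i} = S, {i : Y_i ∈ B_i} = T) = q^{#T} (1-q)^{#S-#T} P({i : Y_i ∈ A_i} = S)` for
`T ⊆ S`; summing over `T` with `#T = k` and over `S` with `#S = m` yields the binomial thinning
`P(#B = k, #A = m) = C(m,k) q^k (1-q)^{m-k} P(#A = m)`.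
-/

open Finset
open scoped ENNReal

section HitIndices

variable {Ω ι β : Type*} {Y : ι → Ω → β} {I S T : Finset ι} {A B C : ι → Set β}

open Classical in
noncomputable def hitIndices (I : Finset ι) (Y : ι → Ω → β) (C : ι → Set β) (ω : Ω) :
    Finset ι :=
  I.filter fun i => Y i ω ∈ C i

lemma mem_hitIndices {ω : Ω} {i : ι} : i ∈ hitIndices I Y C ω ↔ i ∈ I ∧ Y i ω ∈ C i := by
  classical exact mem_filter

lemma hitIndices_subset (ω : Ω) : hitIndices I Y C ω ⊆ I :=
  fun _ h => (mem_hitIndices.1 h).1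

lemma hitIndices_mono (hBA : ∀ i ∈ I, B i ⊆ A i) (ω : Ω) :
    hitIndices I Y B ω ⊆ hitIndices I Y A ω := fun i h =>
  have ⟨hi, hB⟩ := mem_hitIndices.1 h
  mem_hitIndices.2 ⟨hi, hBA i hi hB⟩

lemma card_hitIndices_insert_update_univ [DecidableEq ι] {a : ι} (ha : a ∉ I) (ω : Ω) :
    #(hitIndices (insert a I) Y (Function.update C a Set.univ) ω) =
      #(hitIndices I Y C ω) + 1 := by
  classical
  have hI : hitIndices I Y (Function.update C a Set.univ) ω = hitIndices I Y C ω :=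
    filter_congr fun i hi => by rw [Function.update_of_ne (ne_of_mem_of_not_mem hi ha)]
  rw [← hI]
  unfold hitIndices
  rw [filter_insert, Function.update_self, if_pos (Set.mem_univ _),
    card_insert_of_notMem fun h => ha (mem_filter.1 h).1]

lemma setOf_hitIndices_eq [DecidableEq ι] (hS : S ⊆ I) :
    {ω | hitIndices I Y C ω = S} = ⋂ i ∈ I, Y i ⁻¹' (if i ∈ S then C i else (C i)ᶜ) := by
  ext ω
  simp only [Set.mem_ofPred_eq, Set.mem_iInter, Set.mem_preimage]
  constructor
  · rintro rfl i hi
    split_ifs with h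
    · exact (mem_hitIndices.1 h).2
    · exact fun hC => h (mem_hitIndices.2 ⟨hi, hC⟩)
  · intro h
    ext i
    rw [mem_hitIndices]
    refine ⟨fun ⟨hi, hC⟩ => ?_, fun hiS => ⟨hS hiS, ?_⟩⟩
    · by_contra hiS
      simpa [if_neg hiS, hC] using h i hi
    · simpa [if_pos hiS] using h i (hS hiS)

lemma prod_ite_mem_ite_mem [DecidableEq ι] {M : Type*} [CommMonoid M] (x y : M) (hTS : T ⊆ S)
    (hSI : S ⊆ I) :
    ∏ i ∈ I, (if i ∈ T then x else if i ∈ S then y else 1) = x ^ #T * y ^ (#S - #T) := by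
  rw [← prod_subset hSI fun i _ hi => by rw [if_neg (fun h => hi (hTS h)), if_neg hi],
    prod_ite, filter_mem_eq_inter, inter_eq_right.2 hTS, prod_const,
    prod_congr rfl fun i hi => if_pos (mem_filter.1 hi).1, prod_const,
    filter_notMem_eq_sdiff, card_sdiff_of_subset hTS]

end HitIndices

section Measure

variable {Ω ι β : Type*} [MeasurableSpace Ω] [MeasurableSpace β] {P : Measure Ω}
  {Y : ι → Ω → β} {I S T : Finset ι} {A B C : ι → Set β} {q : ℝ≥0∞}

lemma measurableSet_ite_mem_compl [DecidableEq ι] (hC : ∀ i, MeasurableSet (C i)) (i : ι) :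
    MeasurableSet (if i ∈ S then C i else (C i)ᶜ) := by
  split_ifs
  exacts [hC i, (hC i).compl]

lemma measurableSet_hitIndices_eq [DecidableEq ι] (hY : ∀ i, Measurable (Y i))
    (hC : ∀ i, MeasurableSet (C i)) (S : Finset ι) :
    MeasurableSet {ω | hitIndices I Y C ω = S} := by
  by_cases hS : S ⊆ I
  · rw [setOf_hitIndices_eq hS]
    exact .biInter I.countable_toSet fun i _ => hY i (measurableSet_ite_mem_compl hC i)
  · convert MeasurableSet.empty
    exact Set.eq_empty_of_forall_notMem fun ω h => hS (h ▸ hitIndices_subset ω)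

lemma measurable_card_hitIndices (hY : ∀ i, Measurable (Y i))
    (hC : ∀ i, MeasurableSet (C i)) : Measurable fun ω => #(hitIndices I Y C ω) := by
  classical
  simp only [hitIndices, card_filter]
  exact measurable_sum _ fun i _ => Measurable.ite (hY i (hC i)) measurable_const measurable_const

lemma measure_hitIndices_eq [DecidableEq ι] (hindep : iIndepFun Y P)
    (hC : ∀ i, MeasurableSet (C i)) (hS : S ⊆ I) :
    P {ω | hitIndices I Y C ω = S} = ∏ i ∈ I, P (Y i ⁻¹' if i ∈ S then C i else (C i)ᶜ) := by
  rw [setOf_hitIndices_eq hS]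
  exact hindep.meas_biInter fun i _ => ⟨_, measurableSet_ite_mem_compl hC i, rfl⟩

lemma measure_card_eq_inter_eq_sum {g : Ω → Finset ι} {E : Set Ω} (hg : ∀ ω ∈ E, g ω ⊆ I)
    {m : ℕ} (hmeas : ∀ S ∈ I.powersetCard m, MeasurableSet ({ω | g ω = S} ∩ E)) :
    P ({ω | #(g ω) = m} ∩ E) = ∑ S ∈ I.powersetCard m, P ({ω | g ω = S} ∩ E) := by
  have hunion : {ω | #(g ω) = m} ∩ E = ⋃ S ∈ I.powersetCard m, {ω | g ω = S} ∩ E := by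
    ext ω
    simp only [Set.mem_inter_iff, Set.mem_ofPred_eq, Set.mem_iUnion, mem_powersetCard,
      exists_prop]
    constructor
    · rintro ⟨hm, hE⟩
      exact ⟨g ω, ⟨hg ω hE, hm⟩, rfl, hE⟩
    · rintro ⟨S, ⟨-, hm⟩, rfl, hE⟩
      exact ⟨hm, hE⟩
  rw [hunion, measure_biUnion_finset _ hmeas]
  exact fun S _ S' _ h => Set.disjoint_left.2 fun ω h₁ h₂ => h (h₁.1.symm.trans h₂.1)

lemma measure_preimage_ite_inter_ite [IsFiniteMeasure P] {X : Ω → β} (hX : Measurable X)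
    {A B : Set β} (hB : MeasurableSet B) (hBA : B ⊆ A) (hq : P (X ⁻¹' B) = q * P (X ⁻¹' A))
    {s t : Prop} [Decidable s] [Decidable t] (hts : t → s) :
    P (X ⁻¹' ((if t then B else Bᶜ) ∩ (if s then A else Aᶜ))) =
      (if t then q else if s then 1 - q else 1) * P (X ⁻¹' if s then A else Aᶜ) := by
  by_cases ht : t
  · simp only [if_pos ht, if_pos (hts ht), Set.inter_eq_left.2 hBA, hq]
  by_cases hs : s
  · simp only [if_neg ht, if_pos hs, ← Set.sdiff_eq_compl_inter, Set.preimage_sdiff]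
    rw [measure_sdiff (Set.preimage_mono hBA) (hX hB).nullMeasurableSet (measure_ne_top _ _),
      hq, ENNReal.sub_mul fun _ _ => measure_ne_top _ _, one_mul]
  · simp only [if_neg ht, if_neg hs, one_mul,
      Set.inter_eq_right.2 (Set.compl_subset_compl.2 hBA)]

lemma measure_hitIndices_eq_inter_hitIndices_eq [DecidableEq ι] [IsFiniteMeasure P]
    (hindep : iIndepFun Y P) (hY : ∀ i, Measurable (Y i))
    (hA : ∀ i, MeasurableSet (A i)) (hB : ∀ i, MeasurableSet (B i)) (hBA : ∀ i ∈ I, B i ⊆ A i)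
    (hq : ∀ i ∈ I, P (Y i ⁻¹' B i) = q * P (Y i ⁻¹' A i)) (hTS : T ⊆ S) (hSI : S ⊆ I) :
    P ({ω | hitIndices I Y B ω = T} ∩ {ω | hitIndices I Y A ω = S}) =
      q ^ #T * (1 - q) ^ (#S - #T) * P {ω | hitIndices I Y A ω = S} := by
  rw [measure_hitIndices_eq hindep hA hSI, setOf_hitIndices_eq (hTS.trans hSI),
    setOf_hitIndices_eq hSI]
  simp_rw [← Set.iInter_inter_distrib, ← Set.preimage_inter]
  rw [hindep.meas_biInter fun i _ => ⟨_, (measurableSet_ite_mem_compl hB i).inter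
      (measurableSet_ite_mem_compl hA i), rfl⟩,
    prod_congr rfl fun i hi => measure_preimage_ite_inter_ite (hY i) (hB i) (hBA i hi) (hq i hi)
      fun h => hTS h, prod_mul_distrib, prod_ite_mem_ite_mem q (1 - q) hTS hSI]

lemma measure_card_hitIndices_eq_inter_hitIndices_eq [DecidableEq ι] [IsFiniteMeasure P]
    (hindep : iIndepFun Y P) (hY : ∀ i, Measurable (Y i))
    (hA : ∀ i, MeasurableSet (A i)) (hB : ∀ i, MeasurableSet (B i)) (hBA : ∀ i ∈ I, B i ⊆ A i)
    (hq : ∀ i ∈ I, P (Y i ⁻¹' B i) = q * P (Y i ⁻¹' A i)) (hSI : S ⊆ I) (k : ℕ) :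
    P ({ω | #(hitIndices I Y B ω) = k} ∩ {ω | hitIndices I Y A ω = S}) =
      (#S).choose k * q ^ k * (1 - q) ^ (#S - k) * P {ω | hitIndices I Y A ω = S} := by
  rw [measure_card_eq_inter_eq_sum (fun ω hω => hω ▸ hitIndices_mono hBA ω) fun T _ =>
      (measurableSet_hitIndices_eq hY hB T).inter (measurableSet_hitIndices_eq hY hA S)]
  calc ∑ T ∈ S.powersetCard k, P ({ω | hitIndices I Y B ω = T} ∩ {ω | hitIndices I Y A ω = S})
      = ∑ T ∈ S.powersetCard k, q ^ k * (1 - q) ^ (#S - k) * P {ω | hitIndices I Y A ω = S} :=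
        sum_congr rfl fun T hT => by
          rw [measure_hitIndices_eq_inter_hitIndices_eq hindep hY hA hB hBA hq
            (mem_powersetCard.1 hT).1 hSI, (mem_powersetCard.1 hT).2]
    _ = _ := by rw [sum_const, card_powersetCard, nsmul_eq_mul, mul_assoc, mul_assoc, mul_assoc]

theorem measure_card_hitIndices_inter_card_hitIndices [DecidableEq ι] [IsFiniteMeasure P]
    (hindep : iIndepFun Y P) (hY : ∀ i, Measurable (Y i))
    (hA : ∀ i, MeasurableSet (A i)) (hB : ∀ i, MeasurableSet (B i)) (hBA : ∀ i ∈ I, B i ⊆ A i)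
    (hq : ∀ i ∈ I, P (Y i ⁻¹' B i) = q * P (Y i ⁻¹' A i)) (k m : ℕ) :
    P ({ω | #(hitIndices I Y B ω) = k} ∩ {ω | #(hitIndices I Y A ω) = m}) =
      m.choose k * q ^ k * (1 - q) ^ (m - k) * P {ω | #(hitIndices I Y A ω) = m} := by
  have hmeas (E : Set Ω) (hE : MeasurableSet E) (S : Finset ι) :
      MeasurableSet ({ω | hitIndices I Y A ω = S} ∩ E) :=
    (measurableSet_hitIndices_eq hY hA S).inter hE
  have hcardB : MeasurableSet {ω | #(hitIndices I Y B ω) = k} :=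
    measurable_card_hitIndices hY hB (measurableSet_singleton k)
  have hA_sum := measure_card_eq_inter_eq_sum (P := P) (m := m)
    (fun ω (_ : ω ∈ Set.univ) => hitIndices_subset ω) fun S _ => hmeas _ .univ S
  simp only [Set.inter_univ] at hA_sum
  rw [Set.inter_comm, hA_sum, mul_sum,
    measure_card_eq_inter_eq_sum (fun ω _ => hitIndices_subset ω) fun S _ => hmeas _ hcardB S]
  refine sum_congr rfl fun S hS => ?_
  rw [Set.inter_comm, measure_card_hitIndices_eq_inter_hitIndices_eq hindep hY
    hA hB hBA hq (mem_powersetCard.1 hS).1, (mem_powersetCard.1 hS).2]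

end Measure

section Geometric

variable {Ω : Type*} [MeasurableSpace Ω] {P : Measure Ω} {X : Ω → ℕ} {p : ℝ}

lemma measure_lt_of_geometric (hp0 : 0 < p) (hp1 : p ≤ 1) (hX : Measurable X)
    (hlaw : ∀ j : ℕ, 1 ≤ j → P {ω | X ω = j} = ENNReal.ofReal (p * (1 - p) ^ (j - 1)))
    (t : ℕ) : P {ω | t < X ω} = ENNReal.ofReal ((1 - p) ^ t) := by
  have hq0 : 0 ≤ 1 - p := by linarith
  have hq1 : 1 - p < 1 := by linarith
  have hunion : {ω | t < X ω} = ⋃ j : ℕ, {ω | X ω = t + 1 + j} := by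
    ext ω
    simp only [Set.mem_ofPred_eq, Set.mem_iUnion]
    exact ⟨fun h => ⟨X ω - (t + 1), by omega⟩, fun ⟨j, hj⟩ => by omega⟩
  have hterm (j : ℕ) :
      P {ω | X ω = t + 1 + j} = ENNReal.ofReal (p * (1 - p) ^ t * (1 - p) ^ j) := by
    rw [hlaw _ (by omega), show t + 1 + j - 1 = t + j by omega, pow_add, mul_assoc]
  have hsum : HasSum (fun j : ℕ => p * (1 - p) ^ t * (1 - p) ^ j) ((1 - p) ^ t) := by
    have := (hasSum_geometric_of_lt_one hq0 hq1).mul_left (p * (1 - p) ^ t)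
    rwa [sub_sub_cancel, mul_right_comm, mul_inv_cancel₀ hp0.ne', one_mul] at this
  have hmeas (j : ℕ) : MeasurableSet {ω | X ω = t + 1 + j} := hX (measurableSet_singleton _)
  rw [hunion, measure_iUnion (fun j j' h => Set.disjoint_left.2 fun ω h₁ h₂ => h (by
      simp only [Set.mem_ofPred_eq] at h₁ h₂; omega)) hmeas]
  simp_rw [hterm]
  rw [← ENNReal.ofReal_tsum_of_nonneg (fun j => by positivity) hsum.summable, hsum.tsum_eq]

lemma measure_succ_lt_of_geometric (hp0 : 0 < p) (hp1 : p ≤ 1) (hX : Measurable X)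
    (hlaw : ∀ j : ℕ, 1 ≤ j → P {ω | X ω = j} = ENNReal.ofReal (p * (1 - p) ^ (j - 1)))
    (t : ℕ) : P {ω | t + 1 < X ω} = ENNReal.ofReal (1 - p) * P {ω | t < X ω} := by
  rw [measure_lt_of_geometric hp0 hp1 hX hlaw, measure_lt_of_geometric hp0 hp1 hX hlaw,
    ← ENNReal.ofReal_mul (by linarith), pow_succ']

end Geometric

section Renovation

variable {Ω : Type*}

def exceedSet (n : ℕ) (i : ℤ) : Set ℕ := {x | i + n - 1 < (x : ℤ)}

lemma exceedSet_succ_subset_update (n : ℕ) (i : ℤ) :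
    exceedSet (n + 1) i ⊆ Function.update (exceedSet n) (1 - n) Set.univ i := by
  by_cases hi : i = 1 - n
  · rw [hi, Function.update_self]
    exact Set.subset_univ _
  · rw [Function.update_of_ne hi]
    intro x hx
    simp only [exceedSet, Set.mem_ofPred_eq] at hx ⊢
    push_cast at hx
    omega

lemma Mcount_eq_card_hitIndices (ξ : ℤ → Ω → ℕ) (n : ℕ) (ω : Ω) :
    Mcount ξ n ω = #(hitIndices (Icc (2 - (n : ℤ)) 1) ξ (exceedSet n) ω) := by
  classical
  exact congrArg card (filter_congr fun _ _ => Iff.rfl)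

lemma Icc_two_sub_succ_eq_insert (n : ℕ) :
    Icc (2 - ((n + 1 : ℕ) : ℤ)) 1 = insert (1 - (n : ℤ)) (Icc (2 - (n : ℤ)) 1) := by
  ext i
  simp only [mem_Icc, mem_insert]
  omega

lemma Mcount_succ_eq_card_hitIndices (ξ : ℤ → Ω → ℕ) (n : ℕ) (ω : Ω) :
    Mcount ξ (n + 1) ω =
      #(hitIndices (insert (1 - (n : ℤ)) (Icc (2 - (n : ℤ)) 1)) ξ (exceedSet (n + 1)) ω) := by
  rw [Mcount_eq_card_hitIndices, Icc_two_sub_succ_eq_insert]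

lemma Mcount_add_one_eq_card_hitIndices (ξ : ℤ → Ω → ℕ) (n : ℕ) (ω : Ω) :
    Mcount ξ n ω + 1 = #(hitIndices (insert (1 - (n : ℤ)) (Icc (2 - (n : ℤ)) 1)) ξ
      (Function.update (exceedSet n) (1 - n) Set.univ) ω) := by
  rw [card_hitIndices_insert_update_univ (by simp), Mcount_eq_card_hitIndices]

lemma preimage_exceedSet {X : Ω → ℕ} {n : ℕ} {i : ℤ} (hi : 1 - (n : ℤ) ≤ i) :
    X ⁻¹' exceedSet n i = {ω | (i + n - 1).toNat < X ω} := by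
  ext ω
  simp only [Set.mem_preimage, exceedSet, Set.mem_ofPred_eq]
  omega

lemma preimage_exceedSet_succ {X : Ω → ℕ} {n : ℕ} {i : ℤ} (hi : 1 - (n : ℤ) ≤ i) :
    X ⁻¹' exceedSet (n + 1) i = {ω | (i + n - 1).toNat + 1 < X ω} := by
  ext ω
  simp only [Set.mem_preimage, exceedSet, Set.mem_ofPred_eq]
  push_cast
  omega

lemma measure_preimage_exceedSet_succ [MeasurableSpace Ω] {P : Measure Ω}
    [IsProbabilityMeasure P] {X : Ω → ℕ} {p : ℝ} (hp0 : 0 < p) (hp1 : p ≤ 1)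
    (hX : Measurable X)
    (hlaw : ∀ j : ℕ, 1 ≤ j → P {ω | X ω = j} = ENNReal.ofReal (p * (1 - p) ^ (j - 1)))
    {n : ℕ} {i : ℤ} (hi : 1 - (n : ℤ) ≤ i) :
    P (X ⁻¹' exceedSet (n + 1) i) =
      ENNReal.ofReal (1 - p) * P (X ⁻¹' Function.update (exceedSet n) (1 - n) Set.univ i) := by
  rw [preimage_exceedSet_succ hi, measure_succ_lt_of_geometric hp0 hp1 hX hlaw,
    ← preimage_exceedSet hi]
  by_cases hia : i = 1 - n
  · subst hia
    rw [Function.update_self, Set.preimage_univ, measure_univ, preimage_exceedSet le_rfl,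
      measure_lt_of_geometric hp0 hp1 hX hlaw]
    simp
  · rw [Function.update_of_ne hia]

end Renovation

/-- for i.i.d. Geometric(p) variables `ξ`, conditionally on `M_{n-1}` the
variable `M_n` is Binomial(`M_{n-1} + 1`, `1-p`):
`P(M_n = k, M_{n-1} = m) = P(M_{n-1} = m) · C(m+1, k) (1-p)^k p^{m+1-k}`. -/
theorem Mcount_conditional_binomial (p : ℝ) (hp0 : 0 < p) (hp1 : p ≤ 1)
    {Ω : Type*} [MeasurableSpace Ω] (P : Measure Ω) [IsProbabilityMeasure P]
    (ξ : ℤ → Ω → ℕ) (hmeas : ∀ m, Measurable (ξ m))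
    (hlaw : ∀ m : ℤ, ∀ j : ℕ, 1 ≤ j →
      P {ω | ξ m ω = j} = ENNReal.ofReal (p * (1 - p) ^ (j - 1)))
    (hindep : iIndepFun ξ P) :
    ∀ n : ℕ, 1 ≤ n → ∀ m k : ℕ,
      P {ω | Mcount ξ n ω = k ∧ Mcount ξ (n - 1) ω = m} =
        P {ω | Mcount ξ (n - 1) ω = m} *
          ENNReal.ofReal (((m + 1).choose k : ℝ) * (1 - p) ^ k * p ^ (m + 1 - k)) := by
  intro n hn m k
  obtain ⟨n, rfl⟩ : ∃ n', n = n' + 1 := ⟨n - 1, by omega⟩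
  have hbinom := measure_card_hitIndices_inter_card_hitIndices
    (I := insert (1 - (n : ℤ)) (Icc (2 - (n : ℤ)) 1)) hindep hmeas
    (fun _ => MeasurableSet.of_discrete) (fun _ => MeasurableSet.of_discrete)
    (fun i _ => exceedSet_succ_subset_update n i)
    (fun i hi => measure_preimage_exceedSet_succ hp0 hp1 (hmeas i) (hlaw i) (by
      simp only [mem_insert, mem_Icc] at hi
      omega)) k (m + 1)
  simp only [← Mcount_succ_eq_card_hitIndices, ← Mcount_add_one_eq_card_hitIndices,
    add_left_inj] at hbinom
  have h1q : 1 - ENNReal.ofReal (1 - p) = ENNReal.ofReal p := by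
    rw [← ENNReal.ofReal_one, ← ENNReal.ofReal_sub _ (by linarith), sub_sub_cancel]
  rw [Nat.add_sub_cancel, Set.ofPred_and, hbinom, mul_comm, h1q,
    ENNReal.ofReal_mul (by positivity), ENNReal.ofReal_mul (by positivity),
    ENNReal.ofReal_natCast, ENNReal.ofReal_pow (by linarith), ENNReal.ofReal_pow hp0.le]
end

section
/- The random time T_past = inf{n ∈ ℕ : M_n = 0}, where (M_n) is a Galton–Watson process with Bernoulli(1−p) offspring distribution and Bernoulli(1−p) immigration at each step (started at M_0 = 0), has finite exponential moments: for every p ∈ (0,1] there exists ρ_p > 1 such that E[ρ_p^{T_past}] < ∞. -/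
open MeasureTheory ProbabilityTheory

/-- `T_past = inf {n ≥ 1 : M_n = 0}`. -/
noncomputable def Tpast {Ω : Type*} (ξ : ℤ → Ω → ℕ) (ω : Ω) : ℕ :=
  sInf {n : ℕ | 1 ≤ n ∧ Mcount ξ n ω = 0}

/-!
Write `q = 1 - p` and `T = T_past`. The event `M_N = 0` says that the word `ξ_{2-N} ⋯ ξ_1` is
triangular (its `m`-th letter is at most `m`), which has probability `u N = (q; q)_N`.
Splitting according to `T = k` and using the independence of `{T = k}`, which only involves
`ξ_{2-k}, …, ξ_1`, from the letters to its left gives the renewal inequality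
`u N ≤ ∑_{k ≤ N} ℙ(T = k) u (N - k)`. As `u` decreases to a limit `c > 0` with
`u n - c ≤ q^(n+1)/p`, this turns into `(q + c p) ℙ(T > N) ≤ q φ N` for
`φ N = E[q^((N - T)⁺)]`, while `φ (N + 1) = q φ N + p ℙ(T > N)`. Together these give
`φ (N + 1) ≤ θ φ N` with `θ = q (1 + c p) / (q + c p) < 1`, hence `ℙ(T > N) ≤ θ ^ N`, and then
`E[ρ^T] < ∞` for every `ρ < 1/θ`.
-/

open Finset

theorem Finset.one_sub_sum_le_prod_one_sub {ι R : Type*} [CommRing R] [LinearOrder R]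
    [IsStrictOrderedRing R] (s : Finset ι) {x : ι → R} (h0 : ∀ i ∈ s, 0 ≤ x i)
    (h1 : ∀ i ∈ s, x i ≤ 1) : 1 - ∑ i ∈ s, x i ≤ ∏ i ∈ s, (1 - x i) := by
  classical
  induction s using Finset.induction_on with
  | empty => simp
  | insert i s hi ih =>
    rw [sum_insert hi, prod_insert hi]
    have hxi0 := h0 i (mem_insert_self i s)
    have hxi1 := h1 i (mem_insert_self i s)
    have ih := ih (fun j hj => h0 j (mem_insert_of_mem hj))
      (fun j hj => h1 j (mem_insert_of_mem hj))
    have hsum : 0 ≤ ∑ j ∈ s, x j := sum_nonneg fun j hj => h0 j (mem_insert_of_mem hj)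
    nlinarith [mul_le_mul_of_nonneg_left ih (sub_nonneg.2 hxi1)]

noncomputable def qPochhammer (q : ℝ) (n : ℕ) : ℝ := ∏ m ∈ range n, (1 - q ^ (m + 1))

section qPochhammer

variable {q : ℝ}

lemma one_sub_pow_succ_pos (hq0 : 0 ≤ q) (hq1 : q < 1) (m : ℕ) : 0 < 1 - q ^ (m + 1) :=
  sub_pos.2 (pow_lt_one₀ hq0 hq1 m.succ_ne_zero)

lemma qPochhammer_pos (hq0 : 0 ≤ q) (hq1 : q < 1) (n : ℕ) : 0 < qPochhammer q n :=
  prod_pos fun m _ => one_sub_pow_succ_pos hq0 hq1 m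

lemma qPochhammer_le_one (hq0 : 0 ≤ q) (hq1 : q < 1) (n : ℕ) : qPochhammer q n ≤ 1 :=
  prod_le_one (fun m _ => (one_sub_pow_succ_pos hq0 hq1 m).le)
    fun _ _ => sub_le_self _ (pow_nonneg hq0 _)

lemma qPochhammer_antitone (hq0 : 0 ≤ q) (hq1 : q < 1) : Antitone (qPochhammer q) :=
  antitone_nat_of_succ_le fun n => by
    rw [qPochhammer, prod_range_succ]
    exact mul_le_of_le_one_right (qPochhammer_pos hq0 hq1 n).le
      (sub_le_self _ (pow_nonneg hq0 _))

lemma sum_range_pow_add_le (hq0 : 0 ≤ q) (hq1 : q < 1) (N d : ℕ) :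
    ∑ m ∈ range d, q ^ (N + m + 1) ≤ q ^ (N + 1) / (1 - q) := by
  have hgeom : ∑ m ∈ range d, q ^ m ≤ 1 / (1 - q) := by
    rw [le_div_iff₀ (sub_pos.2 hq1)]
    nlinarith [geom_sum_mul q d, pow_nonneg hq0 d]
  calc ∑ m ∈ range d, q ^ (N + m + 1) = q ^ (N + 1) * ∑ m ∈ range d, q ^ m := by
        rw [mul_sum]; exact sum_congr rfl fun m _ => by ring
    _ ≤ q ^ (N + 1) * (1 / (1 - q)) := mul_le_mul_of_nonneg_left hgeom (pow_nonneg hq0 _)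
    _ = q ^ (N + 1) / (1 - q) := by ring

lemma qPochhammer_mul_le (hq0 : 0 ≤ q) (hq1 : q < 1) (N M : ℕ) :
    qPochhammer q N * (1 - q ^ (N + 1) / (1 - q)) ≤ qPochhammer q M := by
  have hN := qPochhammer_pos hq0 hq1 N
  have htail : 0 ≤ q ^ (N + 1) / (1 - q) := div_nonneg (pow_nonneg hq0 _) (sub_pos.2 hq1).le
  rcases le_or_gt N M with hNM | hMN
  · obtain ⟨d, rfl⟩ := Nat.exists_eq_add_of_le hNM
    rw [qPochhammer, qPochhammer, prod_range_add]
    refine mul_le_mul_of_nonneg_left ?_ hN.le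
    calc 1 - q ^ (N + 1) / (1 - q) ≤ 1 - ∑ m ∈ range d, q ^ (N + m + 1) :=
          sub_le_sub_left (sum_range_pow_add_le hq0 hq1 N d) 1
      _ ≤ ∏ m ∈ range d, (1 - q ^ (N + m + 1)) :=
          one_sub_sum_le_prod_one_sub _ (fun m _ => pow_nonneg hq0 _)
            fun m _ => pow_le_one₀ hq0 hq1.le
  · calc qPochhammer q N * (1 - q ^ (N + 1) / (1 - q)) ≤ qPochhammer q N :=
          mul_le_of_le_one_right hN.le (sub_le_self _ htail)
      _ ≤ qPochhammer q M := qPochhammer_antitone hq0 hq1 hMN.le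

lemma exists_qPochhammer_bounds (hq0 : 0 ≤ q) (hq1 : q < 1) :
    ∃ c, 0 < c ∧ ∀ n, c ≤ qPochhammer q n ∧ qPochhammer q n ≤ c + q ^ (n + 1) / (1 - q) := by
  have hbdd : BddBelow (Set.range (qPochhammer q)) :=
    ⟨0, Set.forall_mem_range.2 fun n => (qPochhammer_pos hq0 hq1 n).le⟩
  have hlow : ∀ N, qPochhammer q N * (1 - q ^ (N + 1) / (1 - q)) ≤ ⨅ n, qPochhammer q n :=
    fun N => le_ciInf (qPochhammer_mul_le hq0 hq1 N)
  refine ⟨⨅ n, qPochhammer q n, ?_, fun n => ⟨ciInf_le hbdd n, ?_⟩⟩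
  · obtain ⟨N, hN⟩ : ∃ N, q ^ (N + 1) / (1 - q) < 1 :=
      (exists_pow_lt_of_lt_one (sub_pos.2 hq1) hq1).imp fun N hN => by
        rw [div_lt_one (sub_pos.2 hq1)]
        exact (pow_le_pow_of_le_one hq0 hq1.le N.le_succ).trans_lt hN
    exact lt_of_lt_of_le (mul_pos (qPochhammer_pos hq0 hq1 N) (sub_pos.2 hN)) (hlow N)
  · have hlown := hlow n
    have hle1 := qPochhammer_le_one hq0 hq1 n
    have htail : 0 ≤ q ^ (n + 1) / (1 - q) := div_nonneg (pow_nonneg hq0 _) (sub_pos.2 hq1).le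
    nlinarith

end qPochhammer

section Renewal

-- Think of `a n = ℙ(T > n)` and `f n = ℙ(T = n)`.
variable {a f : ℕ → ℝ}

lemma sum_range_sub_eq_one_sub (ha0 : a 0 = 1) (hstep : ∀ n, a n = a (n + 1) + f (n + 1))
    (N : ℕ) : ∑ j ∈ range N, f (N - j) = 1 - a N := by
  induction N with
  | zero => simp [ha0]
  | succ N ih =>
    rw [sum_range_succ', Nat.sub_zero]
    simp only [Nat.add_sub_add_right, ih]
    linarith [hstep N]

lemma sum_range_sub_mul_pow_succ (hstep : ∀ n, a n = a (n + 1) + f (n + 1)) (q : ℝ) (N : ℕ) :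
    ∑ j ∈ range (N + 1), f (N + 1 - j) * q ^ j + a (N + 1) =
      q * (∑ j ∈ range N, f (N - j) * q ^ j + a N) + (1 - q) * a N := by
  have hshift : ∑ j ∈ range N, f (N + 1 - (j + 1)) * q ^ (j + 1) =
      q * ∑ j ∈ range N, f (N - j) * q ^ j := by
    rw [mul_sum]
    exact sum_congr rfl fun j _ => by rw [Nat.add_sub_add_right, pow_succ]; ring
  rw [sum_range_succ', hshift, Nat.sub_zero, pow_zero, mul_one]
  linarith [hstep N]

lemma mul_le_of_renewal {q c : ℝ} (hq1 : q < 1) {u : ℕ → ℝ} (ha0 : a 0 = 1)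
    (hstep : ∀ n, a n = a (n + 1) + f (n + 1)) (hf : ∀ n, 0 ≤ f n)
    (hu : ∀ n, c ≤ u n ∧ u n ≤ c + q ^ (n + 1) / (1 - q))
    (hren : ∀ N, 1 ≤ N → u N ≤ ∑ j ∈ range N, f (N - j) * u j) {N : ℕ} (hN : 1 ≤ N) :
    (q + c * (1 - q)) * a N ≤ q * (∑ j ∈ range N, f (N - j) * q ^ j + a N) := by
  set S := ∑ j ∈ range N, f (N - j) * q ^ j
  have hcS : c ≤ c * (1 - a N) + q / (1 - q) * S :=
    calc c ≤ u N := (hu N).1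
      _ ≤ ∑ j ∈ range N, f (N - j) * u j := hren N hN
      _ ≤ ∑ j ∈ range N, f (N - j) * (c + q ^ (j + 1) / (1 - q)) :=
        sum_le_sum fun j _ => mul_le_mul_of_nonneg_left (hu j).2 (hf _)
      _ = c * ∑ j ∈ range N, f (N - j) + q / (1 - q) * S := by
        rw [mul_sum, mul_sum, ← sum_add_distrib]
        exact sum_congr rfl fun j _ => by rw [pow_succ]; ring
      _ = c * (1 - a N) + q / (1 - q) * S := by rw [sum_range_sub_eq_one_sub ha0 hstep]
  have hcS' : c * a N * (1 - q) ≤ q * S := by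
    rw [← le_div_iff₀ (sub_pos.2 hq1), mul_div_right_comm]
    linarith
  linarith

theorem exists_pow_bound_of_renewal {q c : ℝ} (hq0 : 0 ≤ q) (hq1 : q < 1) (hc : 0 < c)
    {u : ℕ → ℝ} (ha0 : a 0 = 1) (hstep : ∀ n, a n = a (n + 1) + f (n + 1)) (hf : ∀ n, 0 ≤ f n)
    (hu : ∀ n, c ≤ u n ∧ u n ≤ c + q ^ (n + 1) / (1 - q))
    (hren : ∀ N, 1 ≤ N → u N ≤ ∑ j ∈ range N, f (N - j) * u j) :
    ∃ θ, 0 ≤ θ ∧ θ < 1 ∧ ∀ N, a N ≤ θ ^ N := by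
  have hp : 0 < 1 - q := sub_pos.2 hq1
  obtain ⟨D, hD⟩ : ∃ D, D = q + c * (1 - q) := ⟨_, rfl⟩
  have hDpos : 0 < D := hD ▸ by positivity
  -- `φ N = E[q^((N - T)⁺)]`
  set φ : ℕ → ℝ := fun N => ∑ j ∈ range N, f (N - j) * q ^ j + a N with hφ
  have hkey : ∀ N, 1 ≤ N → D * a N ≤ q * φ N := fun N hN =>
    hD ▸ mul_le_of_renewal hq1 ha0 hstep hf hu hren hN
  obtain ⟨θ, hθ⟩ : ∃ θ, θ = q * (1 + c * (1 - q)) / D := ⟨_, rfl⟩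
  have hθD : θ * D = q * (1 + c * (1 - q)) := hθ ▸ div_mul_cancel₀ _ hDpos.ne'
  have hθ0 : 0 ≤ θ := hθ ▸ by positivity
  have hθ1 : θ < 1 := by
    rw [hθ, div_lt_one hDpos, hD]
    nlinarith [mul_pos hc hp]
  have hφpow : ∀ N, φ (N + 1) ≤ θ ^ N := by
    intro N
    induction N with
    | zero =>
      simp only [hφ, zero_add, sum_range_one, Nat.sub_zero, pow_zero, mul_one]
      linarith [hstep 0]
    | succ N ih =>
      have hk := mul_le_mul_of_nonneg_left (hkey (N + 1) (by omega)) hp.le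
      calc φ (N + 1 + 1) = q * φ (N + 1) + (1 - q) * a (N + 1) :=
            sum_range_sub_mul_pow_succ hstep q (N + 1)
        _ ≤ θ * φ (N + 1) := by
          rw [← mul_le_mul_iff_of_pos_left hDpos]
          linear_combination hk - φ (N + 1) * hθD + q * φ (N + 1) * hD
        _ ≤ θ ^ (N + 1) := by rw [pow_succ']; exact mul_le_mul_of_nonneg_left ih hθ0
  refine ⟨θ, hθ0, hθ1, fun N => ?_⟩
  cases N with
  | zero => simp [ha0]
  | succ N =>
    have hk := hkey (N + 1) (by omega)
    have hq := mul_le_mul_of_nonneg_left (hφpow N) hq0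
    have hslack : 0 ≤ q * (c * (1 - q)) * θ ^ N := by positivity
    rw [← mul_le_mul_iff_of_pos_left hDpos]
    linear_combination hk + hq + hslack - θ ^ N * hθD

end Renewal

theorem exists_lintegral_pow_lt_top_of_tail_le {Ω : Type*} [MeasurableSpace Ω] {μ : Measure Ω}
    [IsFiniteMeasure μ] {T : Ω → ℕ} {A : ℕ → Set Ω} (hA : ∀ N, MeasurableSet (A N))
    (hTA : ∀ N ω, N < T ω → ω ∈ A N) {θ : ℝ} (hθ0 : 0 ≤ θ) (hθ1 : θ < 1)
    (hμA : ∀ N, μ (A N) ≤ ENNReal.ofReal (θ ^ N)) :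
    ∃ ρ : ℝ, 1 < ρ ∧ ∫⁻ ω, ENNReal.ofReal (ρ ^ T ω) ∂μ < ⊤ := by
  set ρ := 2 / (1 + θ) with hρ
  have hρ1 : 1 < ρ := by rw [hρ, one_lt_div (by linarith)]; linarith
  have hρθ : ρ * θ < 1 := by
    rw [hρ, div_mul_eq_mul_div, div_lt_one (by linarith)]; linarith
  have hρ0 : 0 ≤ ρ := by linarith
  set g : ℕ → Ω → ENNReal := fun N => (A N).indicator fun _ => ENNReal.ofReal (ρ ^ (N + 1))
  have hpoint : ∀ ω, ENNReal.ofReal (ρ ^ T ω) ≤ 1 + ∑' N, g N ω := by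
    intro ω
    cases hT : T ω with
    | zero => simp
    | succ n =>
      calc ENNReal.ofReal (ρ ^ (n + 1)) = g n ω :=
            (Set.indicator_of_mem (hTA n ω (by omega)) fun _ => ENNReal.ofReal (ρ ^ (n + 1))).symm
        _ ≤ ∑' N, g N ω := ENNReal.le_tsum n
        _ ≤ 1 + ∑' N, g N ω := le_add_self
  refine ⟨ρ, hρ1, ?_⟩
  calc ∫⁻ ω, ENNReal.ofReal (ρ ^ T ω) ∂μ ≤ ∫⁻ ω, 1 + ∑' N, g N ω ∂μ := lintegral_mono hpoint
    _ = μ Set.univ + ∑' N, ENNReal.ofReal (ρ ^ (N + 1)) * μ (A N) := by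
      rw [lintegral_add_left measurable_const, lintegral_one,
        lintegral_tsum fun N => (measurable_const.indicator (hA N)).aemeasurable]
      simp only [lintegral_indicator_const (hA _)]
    _ ≤ μ Set.univ + ∑' N, ENNReal.ofReal ρ * ENNReal.ofReal (ρ * θ) ^ N := by
      refine add_le_add_right (ENNReal.tsum_le_tsum fun N => ?_) _
      calc ENNReal.ofReal (ρ ^ (N + 1)) * μ (A N)
          ≤ ENNReal.ofReal (ρ ^ (N + 1)) * ENNReal.ofReal (θ ^ N) := by gcongr; exact hμA N
        _ = ENNReal.ofReal ρ * ENNReal.ofReal (ρ * θ) ^ N := by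
          rw [← ENNReal.ofReal_mul (by positivity), ← ENNReal.ofReal_pow (by positivity),
            ← ENNReal.ofReal_mul hρ0, mul_pow, pow_succ]
          ring_nf
    _ < ⊤ := by
      rw [ENNReal.tsum_mul_left]
      refine ENNReal.add_lt_top.2 ⟨measure_lt_top μ _, ENNReal.mul_lt_top ENNReal.ofReal_lt_top ?_⟩
      exact tsum_geometric_lt_top.2 (ENNReal.ofReal_lt_one.2 hρθ)

theorem measure_le_eq_of_geometric {Ω : Type*} [MeasurableSpace Ω] {P : Measure Ω}
    [IsProbabilityMeasure P] {p : ℝ} (hp0 : 0 < p) (hp1 : p ≤ 1) {X : Ω → ℕ}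
    (hX : Measurable X)
    (hlaw : ∀ j : ℕ, 1 ≤ j → P {ω | X ω = j} = ENNReal.ofReal (p * (1 - p) ^ (j - 1)))
    (t : ℕ) : P {ω | X ω ≤ t} = ENNReal.ofReal (1 - (1 - p) ^ t) := by
  have hq0 : 0 ≤ 1 - p := by linarith
  have hq1 : 1 - p < 1 := by linarith
  have hgt : P {ω | t < X ω} = ENNReal.ofReal ((1 - p) ^ t) := by
    have hunion : {ω | t < X ω} = ⋃ j : ℕ, {ω | X ω = t + 1 + j} := by
      ext ω; simp only [Set.mem_iUnion, Set.mem_ofPred_eq]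
      exact ⟨fun h => ⟨X ω - (t + 1), by omega⟩, fun ⟨j, hj⟩ => by omega⟩
    have hdisj : Pairwise (Function.onFun Disjoint fun j : ℕ => {ω | X ω = t + 1 + j}) :=
      fun i j hij => Set.disjoint_left.2 fun ω hi hj => hij (by simp_all)
    rw [hunion, measure_iUnion hdisj fun j => hX (measurableSet_singleton _)]
    have hterm : ∀ j : ℕ,
        P {ω | X ω = t + 1 + j} = ENNReal.ofReal (p * (1 - p) ^ t * (1 - p) ^ j) := by
      intro j
      rw [hlaw _ (by omega), mul_assoc, ← pow_add]
      congr 3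
      omega
    simp_rw [hterm]
    rw [← ENNReal.ofReal_tsum_of_nonneg (fun j => by positivity)
      ((summable_geometric_of_lt_one hq0 hq1).mul_left _), tsum_mul_left,
      tsum_geometric_of_lt_one hq0 hq1, sub_sub_cancel, mul_comm p, mul_assoc,
      mul_inv_cancel₀ hp0.ne', mul_one]
  have hcompl : {ω | X ω ≤ t} = {ω | t < X ω}ᶜ := by ext; simp
  rw [hcompl, prob_compl_eq_one_sub (measurableSet_lt measurable_const hX), hgt,
    ENNReal.ofReal_sub _ (pow_nonneg hq0 _), ENNReal.ofReal_one]

section Events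

variable {Ω : Type*} (ξ : ℤ → Ω → ℕ)

-- The events `{T_past > N}` and `{T_past = k}`, stated through `Mcount` because `Tpast` takes
-- the junk value `sInf ∅ = 0` when `M` never returns to zero.
def survivalSet (N : ℕ) : Set Ω := {ω | ∀ j, 1 ≤ j → j ≤ N → Mcount ξ j ω ≠ 0}

def firstReturnSet (k : ℕ) : Set Ω :=
  {ω | Mcount ξ k ω = 0 ∧ ∀ j, 1 ≤ j → j < k → Mcount ξ j ω ≠ 0}

def triangularSet (s : ℤ) (n : ℕ) : Set Ω := {ω | ∀ m < n, ξ (s + 1 + m) ω ≤ m + 1}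

variable {ξ}

lemma Mcount_eq_zero_iff {n : ℕ} {ω : Ω} :
    Mcount ξ n ω = 0 ↔ ω ∈ triangularSet ξ (1 - n) n := by
  simp only [Mcount, card_eq_zero, filter_eq_empty_iff, mem_Icc, not_lt, triangularSet,
    Set.mem_ofPred_eq]
  constructor
  · intro h m hm
    have := h (x := 1 - n + 1 + m) ⟨by omega, by omega⟩
    omega
  · intro h i hi
    have := h (i - (2 - n)).toNat (by omega)
    rw [show 1 - (n : ℤ) + 1 + ((i - (2 - n)).toNat : ℕ) = i by omega] at this
    omega

lemma setOf_Mcount_eq_zero (n : ℕ) :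
    {ω | Mcount ξ n ω = 0} = triangularSet ξ (1 - n) n :=
  Set.ext fun _ => Mcount_eq_zero_iff

lemma survivalSet_zero : survivalSet ξ 0 = Set.univ :=
  Set.eq_univ_of_forall fun _ _ hj hj0 => absurd hj (by omega)

lemma triangularSet_anti {s : ℤ} {m n : ℕ} (h : m ≤ n) :
    triangularSet ξ s n ⊆ triangularSet ξ s m :=
  fun _ hω i hi => hω i (by omega)

lemma Tpast_le {ω : Ω} {n : ℕ} (hn : 1 ≤ n) (h : Mcount ξ n ω = 0) : Tpast ξ ω ≤ n :=
  Nat.sInf_le ⟨hn, h⟩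

lemma mem_survivalSet_of_lt_Tpast {N : ℕ} {ω : Ω} (h : N < Tpast ξ ω) : ω ∈ survivalSet ξ N :=
  fun j hj hjN hzero => by have := Tpast_le hj hzero; omega

lemma survivalSet_eq_union (n : ℕ) :
    survivalSet ξ n = survivalSet ξ (n + 1) ∪ firstReturnSet ξ (n + 1) := by
  ext ω
  simp only [survivalSet, firstReturnSet, Set.mem_union, Set.mem_ofPred_eq]
  constructor
  · intro h
    by_cases hz : Mcount ξ (n + 1) ω = 0
    · exact Or.inr ⟨hz, fun j hj hjn => h j hj (by omega)⟩
    · exact Or.inl fun j hj hjn => by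
        rcases Nat.lt_or_ge j (n + 1) with hlt | hge
        · exact h j hj (by omega)
        · rwa [show j = n + 1 by omega]
  · rintro (h | ⟨-, h⟩) j hj hjn
    · exact h j hj (by omega)
    · exact h j hj (by omega)

lemma disjoint_survivalSet_firstReturnSet (n : ℕ) :
    Disjoint (survivalSet ξ (n + 1)) (firstReturnSet ξ (n + 1)) :=
  Set.disjoint_left.2 fun _ h h' => h (n + 1) (Nat.le_add_left 1 n) le_rfl h'.1

lemma Mcount_eq_zero_subset {N : ℕ} (hN : 1 ≤ N) :
    {ω | Mcount ξ N ω = 0} ⊆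
      ⋃ j ∈ range N, firstReturnSet ξ (N - j) ∩ triangularSet ξ (1 - N) j := by
  intro ω hω
  classical
  have hex : ∃ k, 1 ≤ k ∧ Mcount ξ k ω = 0 := ⟨N, hN, hω⟩
  set k := Nat.find hex
  have hkN : k ≤ N := Nat.find_min' hex ⟨hN, hω⟩
  have hk := Nat.find_spec hex
  simp only [Set.mem_iUnion, mem_range]
  refine ⟨N - k, by omega, ⟨?_, ?_⟩, ?_⟩
  · rw [Nat.sub_sub_self hkN]; exact hk.2
  · rw [Nat.sub_sub_self hkN]
    exact fun j hj hjk hz => Nat.find_min hex hjk ⟨hj, hz⟩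
  · exact triangularSet_anti (by omega) (Mcount_eq_zero_iff.1 hω)

end Events

section Measurability

variable {Ω : Type*} {m : MeasurableSpace Ω} {ξ : ℤ → Ω → ℕ}

lemma measurableSet_triangularSet {s : ℤ} {n : ℕ}
    (h : ∀ i, s < i → i ≤ s + n → Measurable (ξ i)) : MeasurableSet (triangularSet ξ s n) := by
  simp only [triangularSet, Set.ofPred_forall]
  exact MeasurableSet.iInter fun j => MeasurableSet.iInter fun hj =>
    h _ (by omega) (by omega) measurableSet_Iic

lemma measurableSet_Mcount_eq_zero {n : ℕ} (h : ∀ i, 2 - (n : ℤ) ≤ i → i ≤ 1 → Measurable (ξ i)) :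
    MeasurableSet {ω | Mcount ξ n ω = 0} := by
  rw [setOf_Mcount_eq_zero]
  exact measurableSet_triangularSet fun i hi hi' => h i (by omega) (by omega)

lemma measurableSet_survivalSet {N : ℕ} (h : ∀ i, 2 - (N : ℤ) ≤ i → i ≤ 1 → Measurable (ξ i)) :
    MeasurableSet (survivalSet ξ N) := by
  simp only [survivalSet, Set.ofPred_forall]
  exact MeasurableSet.iInter fun j => MeasurableSet.iInter fun _ => MeasurableSet.iInter fun hj =>
    (measurableSet_Mcount_eq_zero fun i hi hi' => h i (by omega) hi').compl

lemma measurableSet_firstReturnSet {k : ℕ}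
    (h : ∀ i, 2 - (k : ℤ) ≤ i → i ≤ 1 → Measurable (ξ i)) :
    MeasurableSet (firstReturnSet ξ k) := by
  simp only [firstReturnSet, Set.ofPred_and, Set.ofPred_forall]
  exact (measurableSet_Mcount_eq_zero h).inter <| MeasurableSet.iInter fun j =>
    MeasurableSet.iInter fun _ => MeasurableSet.iInter fun hj =>
      (measurableSet_Mcount_eq_zero fun i hi hi' => h i (by omega) hi').compl

end Measurability

section Probability

variable {Ω : Type*} [MeasurableSpace Ω] {P : Measure Ω} {ξ : ℤ → Ω → ℕ}

-- `{T = k}` is determined by the `ξ_i` with `i ≥ 2 - k`, and the block lies to their left.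
lemma measure_firstReturnSet_inter_triangularSet (hmeas : ∀ i, Measurable (ξ i))
    (hindep : iIndepFun ξ P) {k j : ℕ} {s : ℤ} (h : s + j + k ≤ 1) :
    P (firstReturnSet ξ k ∩ triangularSet ξ s j) =
      P (firstReturnSet ξ k) * P (triangularSet ξ s j) := by
  let mξ : ℤ → MeasurableSpace Ω := fun i => MeasurableSpace.comap (ξ i) inferInstance
  have hsup : ∀ (S : Set ℤ) i, i ∈ S → Measurable[⨆ i ∈ S, mξ i] (ξ i) := fun S i hi =>
    Measurable.of_comap_le (le_iSup₂ (f := fun i (_ : i ∈ S) => mξ i) i hi)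
  have hdisj : Disjoint (Set.Ici (2 - (k : ℤ))) (Set.Iic (s + j)) :=
    Set.disjoint_left.2 fun i hi hi' => by simp only [Set.mem_Ici, Set.mem_Iic] at hi hi'; omega
  refine (Indep_iff _ _ _).1
    (indep_iSup_of_disjoint (fun i => (hmeas i).comap_le) hindep hdisj) _ _ ?_ ?_
  · exact measurableSet_firstReturnSet fun i hi _ => hsup _ i hi
  · exact measurableSet_triangularSet fun i _ hi => hsup _ i hi

lemma measure_Mcount_eq_zero_le (hmeas : ∀ i, Measurable (ξ i)) (hindep : iIndepFun ξ P)
    {N : ℕ} (hN : 1 ≤ N) :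
    P {ω | Mcount ξ N ω = 0} ≤
      ∑ j ∈ range N, P (firstReturnSet ξ (N - j)) * P (triangularSet ξ (1 - N) j) :=
  (measure_mono (Mcount_eq_zero_subset hN)).trans <| (measure_biUnion_finset_le _ _).trans_eq <|
    sum_congr rfl fun j hj => measure_firstReturnSet_inter_triangularSet hmeas hindep
      (by simp only [mem_range] at hj; omega)

lemma measure_survivalSet_eq_add (hmeas : ∀ i, Measurable (ξ i)) (n : ℕ) :
    P (survivalSet ξ n) = P (survivalSet ξ (n + 1)) + P (firstReturnSet ξ (n + 1)) := by
  rw [survivalSet_eq_union, measure_union (disjoint_survivalSet_firstReturnSet n)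
    (measurableSet_firstReturnSet fun i _ _ => hmeas i)]

lemma measure_triangularSet {p : ℝ} (hp0 : 0 < p) (hp1 : p ≤ 1) [IsProbabilityMeasure P]
    (hmeas : ∀ i, Measurable (ξ i)) (hindep : iIndepFun ξ P)
    (hlaw : ∀ i : ℤ, ∀ j : ℕ, 1 ≤ j →
      P {ω | ξ i ω = j} = ENNReal.ofReal (p * (1 - p) ^ (j - 1))) (s : ℤ) (n : ℕ) :
    P (triangularSet ξ s n) = ENNReal.ofReal (qPochhammer (1 - p) n) := by
  have hinter : triangularSet ξ s n = ⋂ m ∈ range n, {ω | ξ (s + 1 + m) ω ≤ m + 1} := by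
    ext ω; simp [triangularSet]
  have hshift : Function.Injective fun m : ℕ => s + 1 + m := fun a b hab => by simpa using hab
  rw [hinter, (hindep.precomp hshift).meas_biInter
      (s := fun m : ℕ => {ω | ξ (s + 1 + m) ω ≤ m + 1})
      fun m _ => ⟨Set.Iic (m + 1), measurableSet_Iic, rfl⟩, qPochhammer,
    ENNReal.ofReal_prod_of_nonneg fun _ _ => sub_nonneg.2 (pow_le_one₀ (by linarith) (by linarith))]
  exact prod_congr rfl fun m _ => measure_le_eq_of_geometric hp0 hp1 (hmeas _) (hlaw _) _

end Probability

theorem exists_measure_survivalSet_le_pow {Ω : Type*} [MeasurableSpace Ω] {P : Measure Ω}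
    [IsProbabilityMeasure P] {ξ : ℤ → Ω → ℕ} {p : ℝ} (hp0 : 0 < p) (hp1 : p ≤ 1)
    (hmeas : ∀ i, Measurable (ξ i)) (hindep : iIndepFun ξ P)
    (hlaw : ∀ i : ℤ, ∀ j : ℕ, 1 ≤ j →
      P {ω | ξ i ω = j} = ENNReal.ofReal (p * (1 - p) ^ (j - 1))) :
    ∃ θ, 0 ≤ θ ∧ θ < 1 ∧ ∀ N, P (survivalSet ξ N) ≤ ENNReal.ofReal (θ ^ N) := by
  have hq0 : 0 ≤ 1 - p := by linarith
  have hq1 : 1 - p < 1 := by linarith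
  have hu := measure_triangularSet hp0 hp1 hmeas hindep hlaw
  obtain ⟨c, hc, hcu⟩ := exists_qPochhammer_bounds hq0 hq1
  have hren : ∀ N, 1 ≤ N → qPochhammer (1 - p) N ≤ ∑ j ∈ range N,
      (P (firstReturnSet ξ (N - j))).toReal * qPochhammer (1 - p) j := by
    intro N hN
    have hfin : ∑ j ∈ range N, P (firstReturnSet ξ (N - j)) * P (triangularSet ξ (1 - N) j) ≠ ⊤ :=
      ENNReal.sum_ne_top.2 fun _ _ => ENNReal.mul_ne_top (measure_ne_top _ _) (measure_ne_top _ _)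
    calc qPochhammer (1 - p) N = (P (triangularSet ξ (1 - N) N)).toReal := by
          rw [hu, ENNReal.toReal_ofReal (qPochhammer_pos hq0 hq1 N).le]
      _ ≤ (∑ j ∈ range N, P (firstReturnSet ξ (N - j)) * P (triangularSet ξ (1 - N) j)).toReal :=
          ENNReal.toReal_mono hfin
            (setOf_Mcount_eq_zero N ▸ measure_Mcount_eq_zero_le hmeas hindep hN)
      _ = ∑ j ∈ range N, (P (firstReturnSet ξ (N - j))).toReal * qPochhammer (1 - p) j := by
          rw [ENNReal.toReal_sum fun _ _ =>
            ENNReal.mul_ne_top (measure_ne_top _ _) (measure_ne_top _ _)]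
          simp only [ENNReal.toReal_mul, hu, ENNReal.toReal_ofReal (qPochhammer_pos hq0 hq1 _).le]
  obtain ⟨θ, hθ0, hθ1, hθ⟩ := exists_pow_bound_of_renewal hq0 hq1 hc
    (a := fun N => (P (survivalSet ξ N)).toReal) (f := fun k => (P (firstReturnSet ξ k)).toReal)
    (by simp [survivalSet_zero])
    (fun n => by
      simp only [measure_survivalSet_eq_add hmeas n]
      exact ENNReal.toReal_add (measure_ne_top _ _) (measure_ne_top _ _))
    (fun _ => ENNReal.toReal_nonneg) hcu hren
  exact ⟨θ, hθ0, hθ1, fun N =>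
    (ENNReal.le_ofReal_iff_toReal_le (measure_ne_top _ _) (pow_nonneg hθ0 N)).2 (hθ N)⟩

/-- for every `p ∈ (0,1]`, the time `T_past` has finite exponential
moments: there is `ρ > 1` with `E[ρ^{T_past}] < ∞`. -/
theorem Tpast_finite_exponential_moments (p : ℝ) (hp0 : 0 < p) (hp1 : p ≤ 1)
    {Ω : Type*} [MeasurableSpace Ω] (P : Measure Ω) [IsProbabilityMeasure P]
    (ξ : ℤ → Ω → ℕ) (hmeas : ∀ m, Measurable (ξ m))
    (hlaw : ∀ m : ℤ, ∀ j : ℕ, 1 ≤ j →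
      P {ω | ξ m ω = j} = ENNReal.ofReal (p * (1 - p) ^ (j - 1)))
    (hindep : iIndepFun ξ P) :
    ∃ ρ : ℝ, 1 < ρ ∧ (∫⁻ ω, ENNReal.ofReal (ρ ^ (Tpast ξ ω)) ∂P) < ⊤ := by
  obtain ⟨θ, hθ0, hθ1, hθ⟩ := exists_measure_survivalSet_le_pow hp0 hp1 hmeas hindep hlaw
  exact exists_lintegral_pow_lt_top_of_tail_le
    (fun _ => measurableSet_survivalSet fun i _ _ => hmeas i)
    (fun _ _ => mem_survivalSet_of_lt_Tpast) hθ0 hθ1 hθ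
end

section
/- For the two-atom distribution ν = (1−p)δ_{1/2} + p δ_1 with p ∈ [0,1], the last passage percolation time constant equals C(ν) = 1 − (1−p)/2 = (1+p)/2; equivalently, writing q = 1−p, C((1−q)δ_1 + q δ_{1/2}) = (2−q)/2. -/
open MeasureTheory ProbabilityTheory Filter

noncomputable section

/-- Weight of a directed path, given real edge weights `X`. -/
def pathWeightR (X : ℕ → ℕ → ℝ) : List ℕ → ℝ
  | [] => 0
  | [_] => 0
  | a :: b :: rest => X a b + pathWeightR X (b :: rest)

/-- `π` is a directed (strictly increasing) path from `a` to `b`. -/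
def IsPathFromTo (a b : ℕ) (π : List ℕ) : Prop :=
  π.Chain' (· < ·) ∧ π.head? = some a ∧ π.getLast? = some b

/-- Last passage time between vertices `a` and `b`. -/
def lppR (X : ℕ → ℕ → ℝ) (a b : ℕ) : ℝ :=
  sSup {w | ∃ π : List ℕ, IsPathFromTo a b π ∧ w = pathWeightR X π}

/-- i.i.d. hypothesis for real edge weights indexed by pairs `i < j`. -/
def IIDEdgeWeightsR {Ω : Type*} [MeasurableSpace Ω] (P : Measure Ω)
    (X : ℕ → ℕ → Ω → ℝ) (ν : Measure ℝ) : Prop :=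
  (∀ i j, Measurable (X i j)) ∧
  (∀ i j, i < j → Measure.map (X i j) P = ν) ∧
  iIndepFun
    (fun q : {q : ℕ × ℕ // q.1 < q.2} => X q.1.1 q.1.2) P

end

/-! Every weight lies in `[1/2, 1]`, so a jump `i → j` with `j ≥ i + 2` weighs at most
`1 ≤ (j - i) / 2`, no more than the unit steps it skips. Hence the path `0, 1, …, n` is a
geodesic and `W_n = ∑_{i<n} X (i, i+1)`, a sum of i.i.d. weights of mean `(1 + p) / 2`; the
strong law of large numbers concludes. -/

open Finset

section Paths

variable {X : ℕ → ℕ → ℝ}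

lemma isPathFromTo_singleton_iff {a b x : ℕ} : IsPathFromTo a b [x] ↔ x = a ∧ x = b := by
  simp [IsPathFromTo, List.Chain']

lemma isPathFromTo_cons_cons_iff {a b x y : ℕ} {s : List ℕ} :
    IsPathFromTo a b (x :: y :: s) ↔ x = a ∧ x < y ∧ IsPathFromTo y b (y :: s) := by
  simp only [IsPathFromTo, List.Chain', List.isChain_cons_cons, List.head?_cons,
    List.getLast?_cons_cons, Option.some.injEq, true_and]
  tauto

lemma IsPathFromTo.le {a b : ℕ} : ∀ {π : List ℕ}, IsPathFromTo a b π → a ≤ b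
  | [], h => by simp [IsPathFromTo] at h
  | [_], h => by obtain ⟨rfl, rfl⟩ := isPathFromTo_singleton_iff.mp h; rfl
  | _ :: _ :: _, h => by
    obtain ⟨rfl, hxy, h⟩ := isPathFromTo_cons_cons_iff.mp h
    exact hxy.le.trans h.le

lemma pathWeightR_le_sum_of_le_sum (hX : ∀ i j, i < j → X i j ≤ ∑ k ∈ Ico i j, X k (k + 1))
    {a b : ℕ} : ∀ {π : List ℕ}, IsPathFromTo a b π →
      pathWeightR X π ≤ ∑ k ∈ Ico a b, X k (k + 1)
  | [], h => by simp [IsPathFromTo] at h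
  | [_], h => by obtain ⟨rfl, rfl⟩ := isPathFromTo_singleton_iff.mp h; simp [pathWeightR]
  | x :: y :: s, h => by
    obtain ⟨rfl, hxy, h⟩ := isPathFromTo_cons_cons_iff.mp h
    calc X x y + pathWeightR X (y :: s)
        ≤ ∑ k ∈ Ico x y, X k (k + 1) + ∑ k ∈ Ico y b, X k (k + 1) :=
          add_le_add (hX x y hxy) (pathWeightR_le_sum_of_le_sum hX h)
      _ = ∑ k ∈ Ico x b, X k (k + 1) := sum_Ico_consecutive _ hxy.le h.le

lemma isPathFromTo_range' (a k : ℕ) : IsPathFromTo a (a + k) (List.range' a (k + 1)) :=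
  ⟨(List.isChain_range' a (k + 1) 1).imp (by omega), by simp [List.head?_range'],
    by simp [List.getLast?_range']⟩

lemma pathWeightR_range' (a k : ℕ) :
    pathWeightR X (List.range' a (k + 1)) = ∑ i ∈ Ico a (a + k), X i (i + 1) := by
  induction k generalizing a with
  | zero => simp [pathWeightR]
  | succ k ih =>
    have hcons : pathWeightR X (List.range' a (k + 2)) =
        X a (a + 1) + pathWeightR X (List.range' (a + 1) (k + 1)) := by
      rw [List.range'_succ, List.range'_succ, pathWeightR.eq_3]
    rw [hcons, ih, show a + (k + 1) = a + 1 + k by omega,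
      sum_eq_sum_Ico_succ_bot (show a < a + 1 + k by omega)]

lemma lppR_eq_sum_of_le_sum (hX : ∀ i j, i < j → X i j ≤ ∑ k ∈ Ico i j, X k (k + 1))
    {a b : ℕ} (hab : a ≤ b) : lppR X a b = ∑ k ∈ Ico a b, X k (k + 1) := by
  obtain ⟨k, rfl⟩ := Nat.exists_eq_add_of_le hab
  refine IsGreatest.csSup_eq ⟨⟨_, isPathFromTo_range' a k, (pathWeightR_range' a k).symm⟩, ?_⟩
  rintro _ ⟨π, hπ, rfl⟩
  exact pathWeightR_le_sum_of_le_sum hX hπ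

lemma le_sum_of_mem_Icc {c : ℝ} (hX : ∀ i j, i < j → X i j ∈ Set.Icc c (2 * c)) {i j : ℕ}
    (hij : i < j) : X i j ≤ ∑ k ∈ Ico i j, X k (k + 1) := by
  obtain rfl | hij := (Nat.succ_le_of_lt hij).eq_or_lt
  · simp
  obtain ⟨hlo, hhi⟩ := hX i j (by omega)
  have hsum := card_nsmul_le_sum (Ico i j) (fun k => X k (k + 1)) c
    fun k _ => (hX k (k + 1) k.lt_succ_self).1
  rw [Nat.card_Ico, nsmul_eq_mul] at hsum
  have hlen : (2 : ℝ) ≤ (j - i : ℕ) := by exact_mod_cast (by omega : 2 ≤ j - i)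
  calc X i j ≤ 2 * c := hhi
    _ ≤ (j - i : ℕ) * c := mul_le_mul_of_nonneg_right hlen (by linarith)
    _ ≤ ∑ k ∈ Ico i j, X k (k + 1) := hsum

end Paths

section Probability

variable {Ω : Type*} [MeasurableSpace Ω] {P : Measure Ω} {X : ℕ → ℕ → Ω → ℝ} {ν : Measure ℝ}

lemma IIDEdgeWeightsR.ae_forall_mem (h : IIDEdgeWeightsR P X ν) {s : Set ℝ}
    (hs : MeasurableSet s) (hνs : ν sᶜ = 0) : ∀ᵐ ω ∂P, ∀ i j, i < j → X i j ω ∈ s := by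
  refine ae_all_iff.2 fun i => ae_all_iff.2 fun j => ?_
  rcases lt_or_ge i j with hij | hij
  · have hνs' : ∀ᵐ x ∂(P.map (X i j)), x ∈ s := by rwa [h.2.1 i j hij, ae_iff]
    filter_upwards [(ae_map_iff (h.1 i j).aemeasurable hs).mp hνs'] with ω hω _ using hω
  · exact .of_forall fun _ hij' => absurd hij' hij.not_gt

lemma IIDEdgeWeightsR.ae_tendsto_sum_succ (h : IIDEdgeWeightsR P X ν) (hν : Integrable id ν) :
    ∀ᵐ ω ∂P, Tendsto (fun n : ℕ => (∑ i ∈ range n, X i (i + 1) ω) / n) atTop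
      (nhds (∫ x, x ∂ν)) := by
  obtain ⟨hmeas, hmap, hindep⟩ := h
  have hmap' : ∀ i, P.map (X i (i + 1)) = ν := fun i => hmap i (i + 1) i.lt_succ_self
  have hint : Integrable (X 0 1) P := by
    rw [← hmap' 0] at hν
    exact (integrable_map_measure hν.aestronglyMeasurable (hmeas 0 1).aemeasurable).mp hν
  have hmean : P[X 0 1] = ∫ x, x ∂ν := by
    rw [← hmap 0 1 one_pos]
    exact (integral_map (hmeas 0 1).aemeasurable aestronglyMeasurable_id).symm
  have hpair : Pairwise fun i j => X i (i + 1) ⟂ᵢ[P] X j (j + 1) := fun i j hij =>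
    hindep.indepFun (i := ⟨(i, i + 1), i.lt_succ_self⟩) (j := ⟨(j, j + 1), j.lt_succ_self⟩)
      (by simpa using hij)
  have hident : ∀ i, IdentDistrib (X i (i + 1)) (X 0 1) P P := fun i =>
    ⟨(hmeas _ _).aemeasurable, (hmeas 0 1).aemeasurable, by rw [hmap' i, hmap' 0]⟩
  simpa [hmean] using strong_law_ae_real (fun i => X i (i + 1)) hint hpair hident

end Probability

lemma bernoulliMeasure_compl_eq_zero {α : Type*} [MeasurableSpace α] {x y : α}
    (p : unitInterval) {s : Set α} (hs : MeasurableSet s) (hx : x ∈ s) (hy : y ∈ s) :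
    bernoulliMeasure x y p sᶜ = 0 := by
  classical
  simp [bernoulliMeasure_apply p hs.compl, hx, hy]

lemma ofReal_smul_dirac_add_eq_bernoulliMeasure {α : Type*} [MeasurableSpace α] (x y : α)
    {p : ℝ} (hp0 : 0 ≤ p) (hp1 : p ≤ 1) :
    ENNReal.ofReal (1 - p) • Measure.dirac y + ENNReal.ofReal p • Measure.dirac x =
      bernoulliMeasure x y ⟨p, hp0, hp1⟩ := by
  rw [bernoulliMeasure_def, add_comm, ENNReal.smul_def, ENNReal.smul_def]
  congr 2 <;> rw [← ENNReal.ofReal_coe_nnreal] <;> rfl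

theorem timeConstant_two_atoms_half_general (p : ℝ) (hp0 : 0 ≤ p) (hp1 : p ≤ 1)
    {Ω : Type*} [MeasurableSpace Ω] (P : Measure Ω)
    (X : ℕ → ℕ → Ω → ℝ)
    (hiid : IIDEdgeWeightsR P X
      (ENNReal.ofReal (1 - p) • Measure.dirac (1 / 2 : ℝ) +
        ENNReal.ofReal p • Measure.dirac (1 : ℝ))) :
    ∀ᵐ ω ∂P, Filter.Tendsto (fun n : ℕ => lppR (fun i j => X i j ω) 0 n / (n : ℝ))
      Filter.atTop (nhds ((1 + p) / 2)) := by
  rw [ofReal_smul_dirac_add_eq_bernoulliMeasure _ _ hp0 hp1] at hiid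
  have hmean : ∫ x, x ∂bernoulliMeasure (1 : ℝ) (1 / 2) ⟨p, hp0, hp1⟩ = (1 + p) / 2 := by
    rw [integral_bernoulliMeasure (f := fun x => x)]
    simp only [smul_eq_mul]
    ring
  have hsupp : ∀ᵐ ω ∂P, ∀ i j, i < j → X i j ω ∈ Set.Icc (1 / 2) (2 * (1 / 2)) :=
    hiid.ae_forall_mem measurableSet_Icc <|
      bernoulliMeasure_compl_eq_zero _ measurableSet_Icc (by norm_num) (by norm_num)
  have hslln := hiid.ae_tendsto_sum_succ (integrable_bernoulliMeasure _ _ _ _)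
  filter_upwards [hsupp, hslln] with ω hω hlim
  rw [hmean] at hlim
  refine hlim.congr fun n => ?_
  rw [lppR_eq_sum_of_le_sum (fun i j => le_sum_of_mem_Icc hω) n.zero_le, range_eq_Ico]

/-- for `ν = (1-p)δ_{1/2} + p δ_1`, the time constant is
`C(ν) = (1+p)/2`: almost surely `W_n / n → (1+p)/2`. -/
theorem timeConstant_two_atoms_half (p : ℝ) (hp0 : 0 ≤ p) (hp1 : p ≤ 1)
    {Ω : Type*} [MeasurableSpace Ω] (P : Measure Ω) [IsProbabilityMeasure P]
    (X : ℕ → ℕ → Ω → ℝ)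
    (hiid : IIDEdgeWeightsR P X
      (ENNReal.ofReal (1 - p) • Measure.dirac (1 / 2 : ℝ) +
        ENNReal.ofReal p • Measure.dirac (1 : ℝ))) :
    ∀ᵐ ω ∂P, Filter.Tendsto (fun n : ℕ => lppR (fun i j => X i j ω) 0 n / (n : ℝ))
      Filter.atTop (nhds ((1 + p) / 2)) :=
  timeConstant_two_atoms_half_general p hp0 hp1 P X hiid
end

section
/- The Markov chain (Y_n) on ℕ with transition probabilities p_{i,i+1} = (1−p)^i and p_{i,1} = 1 − (1−p)^i (all other transitions zero), for p ∈ (0,1), is irreducible and has a unique stationary probability distribution π given by π_j = (1−p)^{j(j−1)/2} / Σ_{n=1}^∞ (1−p)^{n(n−1)/2} for all j ∈ ℕ. -/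
/-!
From state `i ≥ 1` the chain jumps to `1` with positive probability and climbs `1 → 2 → ⋯ → j`
with positive probability, so it is irreducible. State `j ≥ 2` can only be entered from `j - 1`,
so stationarity forces `π_j = π_{j-1} (1-p)^{j-1}`, i.e. `π_j = π_1 (1-p)^{j(j-1)/2}`, and the total
mass fixes `π_1`. Conversely this recursion implies the balance equation at `1` by telescoping,
since `π_i (1 - (1-p)^i) = π_i - π_{i+1}`.
-/

noncomputable section

/-- Transition kernel of the chain on states `{1, 2, 3, …}` (state `0` is unused):
`p_{i,i+1} = (1-p)^i`, `p_{i,1} = 1 - (1-p)^i`, all other transitions zero. -/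
def K (p : ℝ) (i j : ℕ) : ℝ :=
  if 1 ≤ i then (if j = i + 1 then (1 - p) ^ i else if j = 1 then 1 - (1 - p) ^ i else 0)
  else 0

/-- `n`-step transition probabilities. -/
def Kpow (p : ℝ) : ℕ → ℕ → ℕ → ℝ
  | 0, i, j => if i = j then 1 else 0
  | n + 1, i, j => ∑' k : ℕ, Kpow p n i k * K p k j

/-- `π` is a stationary probability distribution for the chain (supported on states ≥ 1). -/
def IsStationaryDist (p : ℝ) (π : ℕ → ℝ) : Prop :=
  π 0 = 0 ∧ (∀ j, 0 ≤ π j) ∧ Summable π ∧ (∑' j : ℕ, π j) = 1 ∧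
  ∀ j : ℕ, 1 ≤ j → π j = ∑' i : ℕ, π i * K p i j

/-- The claimed stationary distribution `π_j = (1-p)^{j(j-1)/2} / Σ_{n≥1} (1-p)^{n(n-1)/2}`. -/
def piStat (p : ℝ) (j : ℕ) : ℝ :=
  if j = 0 then 0 else (1 - p) ^ (j * (j - 1) / 2) / ∑' n : ℕ, (1 - p) ^ ((n + 1) * n / 2)

end

section

variable {p : ℝ}

section Kernel

lemma K_nonneg (hp0 : 0 ≤ p) (hp1 : p ≤ 1) (i j : ℕ) : 0 ≤ K p i j := by
  have h0 : 0 ≤ (1 - p) ^ i := pow_nonneg (by linarith) i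
  have h1 : (1 - p) ^ i ≤ 1 := pow_le_one₀ (by linarith) (by linarith)
  unfold K
  split_ifs <;> linarith

lemma K_eq_zero {i j : ℕ} (hj : j ≠ i + 1) (hj1 : j ≠ 1) : K p i j = 0 := by
  simp [K, hj, hj1]

lemma K_succ_pos (hp1 : p < 1) {i : ℕ} (hi : 1 ≤ i) : 0 < K p i (i + 1) := by
  simpa [K, hi] using pow_pos (sub_pos.mpr hp1) i

lemma K_one_pos (hp0 : 0 < p) (hp1 : p ≤ 1) {i : ℕ} (hi : 1 ≤ i) : 0 < K p i 1 := by
  have : (1 - p) ^ i < 1 := pow_lt_one₀ (by linarith) (by linarith) (by omega)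
  rw [K, if_pos hi, if_neg (by omega), if_pos rfl]
  linarith

lemma tsum_mul_K_add_two {π : ℕ → ℝ} (h0 : π 0 = 0) (m : ℕ) :
    ∑' i, π i * K p i (m + 2) = π (m + 1) * (1 - p) ^ (m + 1) := by
  rw [tsum_eq_single (m + 1)]
  · simp [K]
  · intro i hi
    rcases Nat.eq_zero_or_pos i with rfl | _
    · rw [h0, zero_mul]
    · rw [K_eq_zero (by omega) (by omega), mul_zero]

lemma tsum_mul_K_one {π : ℕ → ℝ} (h0 : π 0 = 0) (hπ : Summable π)
    (hrec : ∀ m, π (m + 2) = π (m + 1) * (1 - p) ^ (m + 1)) :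
    ∑' i, π i * K p i 1 = π 1 := by
  have hπ1 : Summable fun i => π (i + 1) := (summable_nat_add_iff 1).mpr hπ
  have hπ2 : Summable fun i => π (i + 2) := (summable_nat_add_iff 2).mpr hπ
  have htelescope : ∀ i, π (i + 1) * K p (i + 1) 1 = π (i + 1) - π (i + 2) := fun i => by
    simp [K, hrec, mul_one_sub]
  calc ∑' i, π i * K p i 1
      = ∑' i, (π (i + 1) - π (i + 2)) := by
        rw [← tsum_congr htelescope,
          tsum_eq_zero_add' ((hπ1.sub hπ2).congr fun i => (htelescope i).symm), h0, zero_mul,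
          zero_add]
    _ = ∑' i, π (i + 1) - ∑' i, π (i + 2) := hπ1.tsum_sub hπ2
    _ = π 1 := by rw [hπ1.tsum_eq_zero_add]; ring

end Kernel

section Kpow

lemma Kpow_eq_zero_of_lt : ∀ {n i j : ℕ}, i + n < j → Kpow p n i j = 0
  | 0, i, j, h => if_neg (by omega)
  | n + 1, i, j, h => by
    refine (tsum_congr fun k => ?_).trans tsum_zero
    by_cases hk : k + 1 = j
    · rw [Kpow_eq_zero_of_lt (by omega), zero_mul]
    · rw [K_eq_zero (Ne.symm hk) (by omega), mul_zero]

lemma summable_Kpow_mul_K (n i j : ℕ) : Summable fun k => Kpow p n i k * K p k j :=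
  summable_of_ne_finset_zero (s := Finset.range (i + n + 1)) fun k hk => by
    rw [Kpow_eq_zero_of_lt (by simpa using hk), zero_mul]

lemma Kpow_nonneg (hp0 : 0 ≤ p) (hp1 : p ≤ 1) : ∀ n i j, 0 ≤ Kpow p n i j
  | 0, i, j => by unfold Kpow; positivity
  | n + 1, i, j =>
    tsum_nonneg fun k => mul_nonneg (Kpow_nonneg hp0 hp1 n i k) (K_nonneg hp0 hp1 k j)

lemma Kpow_succ_pos (hp0 : 0 ≤ p) (hp1 : p ≤ 1) {n i k j : ℕ} (hik : 0 < Kpow p n i k)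
    (hkj : 0 < K p k j) : 0 < Kpow p (n + 1) i j :=
  (mul_pos hik hkj).trans_le <| (summable_Kpow_mul_K n i j).le_tsum k fun l _ =>
    mul_nonneg (Kpow_nonneg hp0 hp1 n i l) (K_nonneg hp0 hp1 l j)

lemma Kpow_pos (hp0 : 0 < p) (hp1 : p < 1) {i j : ℕ} (hi : 1 ≤ i) (hj : 1 ≤ j) :
    0 < Kpow p j i j := by
  obtain ⟨m, rfl⟩ := Nat.exists_eq_add_of_le' hj
  induction m with
  | zero => exact Kpow_succ_pos hp0.le hp1.le (by simp [Kpow]) (K_one_pos hp0 hp1.le hi)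
  | succ m ih => exact Kpow_succ_pos hp0.le hp1.le (ih (by omega)) (K_succ_pos hp1 (by omega))

end Kpow

section Stationary

def stationaryWeight (p : ℝ) (j : ℕ) : ℝ := (1 - p) ^ (j * (j - 1) / 2)

lemma stationaryWeight_succ (j : ℕ) :
    stationaryWeight p (j + 1) = stationaryWeight p j * (1 - p) ^ j := by
  rw [stationaryWeight, stationaryWeight, Nat.triangle_succ, pow_add]

lemma summable_stationaryWeight_succ (hp0 : 0 < p) (hp1 : p ≤ 1) :
    Summable fun n => stationaryWeight p (n + 1) := by
  refine (summable_geometric_of_lt_one (sub_nonneg.mpr hp1) (by linarith)).of_nonneg_of_le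
    (fun n => pow_nonneg (sub_nonneg.mpr hp1) _) fun n => ?_
  refine pow_le_pow_of_le_one (sub_nonneg.mpr hp1) (by linarith) ?_
  rw [Nat.add_sub_cancel, Nat.le_div_iff_mul_le two_pos]
  nlinarith [Nat.le_mul_self n]

lemma tsum_stationaryWeight_succ_pos (hp0 : 0 < p) (hp1 : p ≤ 1) :
    0 < ∑' n, stationaryWeight p (n + 1) :=
  (summable_stationaryWeight_succ hp0 hp1).tsum_pos
    (fun n => pow_nonneg (sub_nonneg.mpr hp1) _) 0 (by simp [stationaryWeight])

lemma piStat_zero : piStat p 0 = 0 := if_pos rfl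

lemma piStat_succ (j : ℕ) :
    piStat p (j + 1) = stationaryWeight p (j + 1) / ∑' n, stationaryWeight p (n + 1) :=
  if_neg j.succ_ne_zero

lemma eq_mul_stationaryWeight {π : ℕ → ℝ}
    (hrec : ∀ m, π (m + 2) = π (m + 1) * (1 - p) ^ (m + 1)) :
    ∀ n, π (n + 1) = π 1 * stationaryWeight p (n + 1)
  | 0 => by simp [stationaryWeight]
  | n + 1 => by
    rw [hrec, eq_mul_stationaryWeight hrec n, stationaryWeight_succ (n + 1), mul_assoc]

lemma tsum_eq_mul_tsum_stationaryWeight {π : ℕ → ℝ} (h0 : π 0 = 0) (hπ : Summable π)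
    (hrec : ∀ m, π (m + 2) = π (m + 1) * (1 - p) ^ (m + 1)) :
    ∑' j, π j = π 1 * ∑' n, stationaryWeight p (n + 1) := by
  rw [hπ.tsum_eq_zero_add, h0, zero_add, tsum_congr (eq_mul_stationaryWeight hrec), tsum_mul_left]

lemma isStationaryDist_iff {π : ℕ → ℝ} :
    IsStationaryDist p π ↔ π 0 = 0 ∧ (∀ j, 0 ≤ π j) ∧ Summable π ∧ ∑' j, π j = 1 ∧
      ∀ m, π (m + 2) = π (m + 1) * (1 - p) ^ (m + 1) := by
  constructor
  · rintro ⟨h0, hnonneg, hπ, hmass, hbalance⟩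
    exact ⟨h0, hnonneg, hπ, hmass, fun m => (hbalance (m + 2) (by omega)).trans
      (tsum_mul_K_add_two h0 m)⟩
  · rintro ⟨h0, hnonneg, hπ, hmass, hrec⟩
    refine ⟨h0, hnonneg, hπ, hmass, fun j hj => ?_⟩
    match j, hj with
    | 1, _ => exact (tsum_mul_K_one h0 hπ hrec).symm
    | m + 2, _ => rw [tsum_mul_K_add_two h0, hrec]

lemma isStationaryDist_piStat (hp0 : 0 < p) (hp1 : p ≤ 1) : IsStationaryDist p (piStat p) := by
  have hZ := tsum_stationaryWeight_succ_pos hp0 hp1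
  have hπ : Summable fun j => piStat p (j + 1) := by
    simpa only [piStat_succ] using (summable_stationaryWeight_succ hp0 hp1).div_const _
  refine isStationaryDist_iff.mpr ⟨piStat_zero, fun j => ?_, (summable_nat_add_iff 1).mp hπ, ?_,
    fun m => ?_⟩
  · cases j with
    | zero => exact piStat_zero.ge
    | succ j => exact piStat_succ j ▸ div_nonneg (pow_nonneg (sub_nonneg.mpr hp1) _) hZ.le
  · rw [tsum_eq_zero_add' hπ, piStat_zero, zero_add]
    simp only [piStat_succ, tsum_div_const, div_self hZ.ne']
  · rw [piStat_succ, piStat_succ, stationaryWeight_succ (m + 1), div_mul_eq_mul_div]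

lemma eq_of_isStationaryDist {π σ : ℕ → ℝ} (hπ : IsStationaryDist p π)
    (hσ : IsStationaryDist p σ) : π = σ := by
  obtain ⟨hπ0, -, hπs, hπ1, hπrec⟩ := isStationaryDist_iff.mp hπ
  obtain ⟨hσ0, -, hσs, hσ1, hσrec⟩ := isStationaryDist_iff.mp hσ
  have hπZ := tsum_eq_mul_tsum_stationaryWeight hπ0 hπs hπrec
  have hσZ := tsum_eq_mul_tsum_stationaryWeight hσ0 hσs hσrec
  have h1 : π 1 = σ 1 := by
    have hmass : π 1 * ∑' n, stationaryWeight p (n + 1) =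
        σ 1 * ∑' n, stationaryWeight p (n + 1) := by
      rw [← hπZ, ← hσZ, hπ1, hσ1]
    exact mul_right_cancel₀ (right_ne_zero_of_mul_eq_one (hπZ ▸ hπ1)) hmass
  funext j
  cases j with
  | zero => rw [hπ0, hσ0]
  | succ n => rw [eq_mul_stationaryWeight hπrec, eq_mul_stationaryWeight hσrec, h1]

end Stationary

end

/-- for `p ∈ (0,1)`, the chain with transitions `p_{i,i+1} = (1-p)^i`,
`p_{i,1} = 1 - (1-p)^i` is irreducible, and `piStat p` is its unique stationary
probability distribution. -/
theorem markov_chain_irreducible_unique_stationary (p : ℝ) (hp0 : 0 < p) (hp1 : p < 1) :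
    (∀ i j : ℕ, 1 ≤ i → 1 ≤ j → ∃ n : ℕ, 0 < Kpow p n i j) ∧
    IsStationaryDist p (piStat p) ∧
    (∀ π : ℕ → ℝ, IsStationaryDist p π → π = piStat p) :=
  have hstat := isStationaryDist_piStat hp0 hp1.le
  ⟨fun _ j hi hj => ⟨j, Kpow_pos hp0 hp1 hi hj⟩, hstat,
    fun _ hπ => eq_of_isStationaryDist hπ hstat⟩
end
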